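/- arXiv:math/0505273 — 12 statements merged into one kernel-verified Lean document; each statement's English description precedes it below -/
import Mathlib

section
/- Let P be a partially ordered set and let Q and R be finite convex subsets of P. Then Q ∧ R is a convex subset of P. -/
variable {P : Type*} [PartialOrder P]

/-- `s < Q`: `s ∉ Q` and `s < t` for some `t ∈ Q`. -/
def ltSet (s : P) (Q : Set P) : Prop := s ∉ Q ∧ ∃ t ∈ Q, s < t

/-- `s > Q`: `s ∉ Q` and `t < s` for some `t ∈ Q`. -/
def gtSet (s : P) (Q : Set P) : Prop := s ∉ Q ∧ ∃ t ∈ Q, t < s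

/-- `s ∼ Q`: `s ∈ Q` or `s` is incomparable with every element of `Q`. -/
def simSet (s : P) (Q : Set P) : Prop := s ∈ Q ∨ ∀ t ∈ Q, ¬ s ≤ t ∧ ¬ t ≤ s

/-- A convex subset of a poset: closed under taking intervals. -/
def IsConvex (Q : Set P) : Prop := ∀ ⦃s r t : P⦄, s ∈ Q → t ∈ Q → s ≤ r → r ≤ t → r ∈ Q

/-- `Q ∧ R = {s ∈ R | s < Q} ∪ {s ∈ Q | s ∼ R or s < R}`. -/
def wedgeSet (Q R : Set P) : Set P :=
  {s | s ∈ R ∧ ltSet s Q} ∪ {s | s ∈ Q ∧ (simSet s R ∨ ltSet s R)}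

/-- `Q ∨ R = {s ∈ Q | s > R} ∪ {s ∈ R | s ∼ Q or s > Q}`. -/
def veeSet (Q R : Set P) : Set P :=
  {s | s ∈ Q ∧ gtSet s R} ∪ {s | s ∈ R ∧ (simSet s Q ∨ gtSet s Q)}

/-- `Q ∧ R` is a convex subset of `P`. -/
theorem wedgeSet_isConvex (Q R : Set P) (hQf : Q.Finite) (hRf : R.Finite)
    (hQ : IsConvex Q) (hR : IsConvex R) : IsConvex (wedgeSet Q R) := by
  rintro s r t hs ht hsr hrt
  simp only [wedgeSet, Set.mem_union, Set.mem_setOf_eq, ltSet, simSet] at hs ht ⊢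
  rcases hs with ⟨hsR, hsQ', q0, hq0, hsq0⟩ | ⟨hsQ, hsim⟩ <;>
    rcases ht with ⟨htR, htQ', q1, hq1, htq1⟩ | ⟨htQ, htsim⟩
  · -- both in A
    have hrR : r ∈ R := hR hsR htR hsr hrt
    by_cases hrQ : r ∈ Q
    · exact Or.inr ⟨hrQ, Or.inl (Or.inl hrR)⟩
    · exact Or.inl ⟨hrR, hrQ, q1, hq1, lt_of_le_of_lt hrt htq1⟩
  · -- s ∈ A, t ∈ B
    rcases htsim with (htR | hinc) | ⟨htR', y, hy, hty⟩
    · have hrR : r ∈ R := hR hsR htR hsr hrt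
      by_cases hrQ : r ∈ Q
      · exact Or.inr ⟨hrQ, Or.inl (Or.inl hrR)⟩
      · exact Or.inl ⟨hrR, hrQ, t, htQ, lt_of_le_of_ne hrt (by rintro rfl; exact hrQ htQ)⟩
    · exact absurd (hsr.trans hrt) (hinc s hsR).2
    · have hrR : r ∈ R := hR hsR hy hsr (hrt.trans hty.le)
      by_cases hrQ : r ∈ Q
      · exact Or.inr ⟨hrQ, Or.inl (Or.inl hrR)⟩
      · exact Or.inl ⟨hrR, hrQ, t, htQ, lt_of_le_of_ne hrt (by rintro rfl; exact htR' hrR)⟩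
  · -- s ∈ B, t ∈ A
    rcases hsim with (hsR | hinc) | ⟨hsR', y, hy, hsy⟩
    · have hrR : r ∈ R := hR hsR htR hsr hrt
      by_cases hrQ : r ∈ Q
      · exact Or.inr ⟨hrQ, Or.inl (Or.inl hrR)⟩
      · exact Or.inl ⟨hrR, hrQ, q1, hq1, lt_of_le_of_lt hrt htq1⟩
    · exact absurd (hsr.trans hrt) (hinc t htR).1
    · have hrQ : r ∈ Q := hQ hsQ hq1 hsr (hrt.trans htq1.le)
      by_cases hrR : r ∈ R
      · exact Or.inr ⟨hrQ, Or.inl (Or.inl hrR)⟩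
      · exact Or.inr ⟨hrQ, Or.inr ⟨hrR, t, htR,
          lt_of_le_of_ne hrt (by rintro rfl; exact hrR htR)⟩⟩
  · -- both in B
    have hrQ : r ∈ Q := hQ hsQ htQ hsr hrt
    by_cases hrR : r ∈ R
    · exact Or.inr ⟨hrQ, Or.inl (Or.inl hrR)⟩
    rcases htsim with (htR | hinc) | ⟨htR', y, hy, hty⟩
    · exact Or.inr ⟨hrQ, Or.inr ⟨hrR, t, htR,
        lt_of_le_of_ne hrt (by rintro rfl; exact hrR htR)⟩⟩
    · by_cases hex : ∃ x ∈ R, r < x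
      · obtain ⟨x, hx, hrx⟩ := hex
        exact Or.inr ⟨hrQ, Or.inr ⟨hrR, x, hx, hrx⟩⟩
      · refine Or.inr ⟨hrQ, Or.inl (Or.inr fun x hx => ⟨fun h => ?_, fun h => ?_⟩)⟩
        · exact hex ⟨x, hx, lt_of_le_of_ne h (by rintro rfl; exact hrR hx)⟩
        · exact (hinc x hx).2 (h.trans hrt)
    · by_cases hex : ∃ x ∈ R, r < x
      · obtain ⟨x, hx, hrx⟩ := hex
        exact Or.inr ⟨hrQ, Or.inr ⟨hrR, x, hx, hrx⟩⟩
      · refine Or.inr ⟨hrQ, Or.inl (Or.inr fun x hx => ⟨fun h => ?_, fun h => ?_⟩)⟩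
        · exact hex ⟨x, hx, lt_of_le_of_ne h (by rintro rfl; exact hrR hx)⟩
        · exact hrR (hR hx hy h (hrt.trans hty.le))
end

section
/- Let P be a partially ordered set and let Q and R be finite convex subsets of P. Then Q ∨ R is a convex subset of P. -/
variable {P : Type*} [PartialOrder P]

/-- `Q ∨ R` is a convex subset of `P`. -/
theorem veeSet_isConvex (Q R : Set P) (hQf : Q.Finite) (hRf : R.Finite)
    (hQ : IsConvex Q) (hR : IsConvex R) : IsConvex (veeSet Q R) := by
  rintro s r t (⟨hsQ, hsnR, u, huR, hus⟩ | ⟨hsR, hscond⟩)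
    (⟨htQ, htnR, w, hwR, hwt⟩ | ⟨htR, htcond⟩) hsr hrt
  · -- s ∈ A, t ∈ A
    exact Or.inl ⟨hQ hsQ htQ hsr hrt,
      fun hrR => hsnR (hR huR hrR hus.le hsr), u, huR, hus.trans_le hsr⟩
  · -- s ∈ A, t ∈ B
    rcases htcond with (htQ | hinc) | ⟨htnQ, v, hvQ, hvt⟩
    · exact Or.inl ⟨hQ hsQ htQ hsr hrt,
        fun hrR => hsnR (hR huR hrR hus.le hsr), u, huR, hus.trans_le hsr⟩
    · exact absurd (hsr.trans hrt) (hinc s hsQ).2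
    · have hrR : r ∈ R := hR huR htR (hus.le.trans hsr) hrt
      by_cases hrQ : r ∈ Q
      · exact Or.inr ⟨hrR, Or.inl (Or.inl hrQ)⟩
      · exact Or.inr ⟨hrR, Or.inr ⟨hrQ, s, hsQ,
          lt_of_le_of_ne hsr (fun h => hrQ (h ▸ hsQ))⟩⟩
  · -- s ∈ B, t ∈ A
    rcases hscond with (hsQ | hinc) | ⟨hsnQ, v, hvQ, hvs⟩
    · have hrQ : r ∈ Q := hQ hsQ htQ hsr hrt
      by_cases hrR : r ∈ R
      · exact Or.inr ⟨hrR, Or.inl (Or.inl hrQ)⟩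
      · exact Or.inl ⟨hrQ, hrR, s, hsR,
          lt_of_le_of_ne hsr (fun h => hrR (h ▸ hsR))⟩
    · exact absurd (hsr.trans hrt) (hinc t htQ).1
    · exact absurd (hQ hvQ htQ hvs.le (hsr.trans hrt)) hsnQ
  · -- s ∈ B, t ∈ B
    have hrR : r ∈ R := hR hsR htR hsr hrt
    by_cases hrQ : r ∈ Q
    · exact Or.inr ⟨hrR, Or.inl (Or.inl hrQ)⟩
    rcases hscond with (hsQ | hinc) | ⟨hsnQ, v, hvQ, hvs⟩
    · exact Or.inr ⟨hrR, Or.inr ⟨hrQ, s, hsQ,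
        lt_of_le_of_ne hsr (fun h => hrQ (h ▸ hsQ))⟩⟩
    · by_cases hex : ∃ w ∈ Q, w ≤ r
      · obtain ⟨w, hwQ, hwr⟩ := hex
        exact Or.inr ⟨hrR, Or.inr ⟨hrQ, w, hwQ,
          lt_of_le_of_ne hwr (fun h => hrQ (h ▸ hwQ))⟩⟩
      · exact Or.inr ⟨hrR, Or.inl (Or.inr (fun w hwQ =>
          ⟨fun h => (hinc w hwQ).1 (hsr.trans h), fun h => hex ⟨w, hwQ, h⟩⟩))⟩
    · exact Or.inr ⟨hrR, Or.inr ⟨hrQ, v, hvQ, hvs.trans_le hsr⟩⟩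
end

section
/- Let P be a partially ordered set and let Q and R be finite convex subsets of P. Then (Q ∧ R) ∪ (Q ∨ R) = Q ∪ R as subsets of P. -/
variable {P : Type*} [PartialOrder P]

/-- `(Q ∧ R) ∪ (Q ∨ R) = Q ∪ R`. -/
theorem wedgeSet_union_veeSet (Q R : Set P) (hQf : Q.Finite) (hRf : R.Finite)
    (hQ : IsConvex Q) (hR : IsConvex R) : wedgeSet Q R ∪ veeSet Q R = Q ∪ R := by
  ext s
  constructor
  · rintro ((⟨h, _⟩ | ⟨h, _⟩) | (⟨h, _⟩ | ⟨h, _⟩))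
    · exact Or.inr h
    · exact Or.inl h
    · exact Or.inl h
    · exact Or.inr h
  · rintro (hs | hs)
    · by_cases hsim : simSet s R
      · exact Or.inl (Or.inr ⟨hs, Or.inl hsim⟩)
      · simp only [simSet, not_or, not_forall] at hsim
        obtain ⟨hsR, t, ht, hcomp⟩ := hsim
        rcases not_and_or.mp hcomp with h1 | h1 <;> rw [not_not] at h1
        · exact Or.inl (Or.inr ⟨hs, Or.inr ⟨hsR, t, ht, lt_of_le_of_ne h1 (fun e => hsR (e ▸ ht))⟩⟩)
        · exact Or.inr (Or.inl ⟨hs, hsR, t, ht, lt_of_le_of_ne h1 (fun e => hsR (e ▸ ht))⟩)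
    · by_cases hsim : simSet s Q
      · exact Or.inr (Or.inr ⟨hs, Or.inl hsim⟩)
      · simp only [simSet, not_or, not_forall] at hsim
        obtain ⟨hsQ, t, ht, hcomp⟩ := hsim
        rcases not_and_or.mp hcomp with h1 | h1 <;> rw [not_not] at h1
        · exact Or.inl (Or.inl ⟨hs, hsQ, t, ht, lt_of_le_of_ne h1 (fun e => hsQ (e ▸ ht))⟩)
        · exact Or.inr (Or.inr ⟨hs, Or.inr ⟨hsQ, t, ht, lt_of_le_of_ne h1 (fun e => hsQ (e ▸ ht))⟩⟩)
end

section
/- Let P be a partially ordered set and let Q and R be finite convex subsets of P. Then (Q ∧ R) ∩ (Q ∨ R) = Q ∩ R as subsets of P. -/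
variable {P : Type*} [PartialOrder P]

/-- `(Q ∧ R) ∩ (Q ∨ R) = Q ∩ R`. -/
theorem wedgeSet_inter_veeSet (Q R : Set P) (hQf : Q.Finite) (hRf : R.Finite)
    (hQ : IsConvex Q) (hR : IsConvex R) : wedgeSet Q R ∩ veeSet Q R = Q ∩ R := by
  ext s
  simp only [Set.mem_inter_iff, wedgeSet, veeSet, ltSet, gtSet, simSet, Set.mem_union,
    Set.mem_setOf_eq]
  constructor
  · rintro ⟨hw, hv⟩
    rcases hw with ⟨hsR, hsnQ, t, htQ, hst⟩ | ⟨hsQ, hB⟩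
    · rcases hv with ⟨hsQ, _⟩ | ⟨_, hD⟩
      · exact absurd hsQ hsnQ
      · rcases hD with (h | h) | ⟨hsnQ', u, huQ, hus⟩
        · exact absurd h hsnQ
        · exact absurd hst.le (h t htQ).1
        · exact absurd (hQ huQ htQ hus.le hst.le) hsnQ
    · rcases hv with ⟨_, hsnR, t, htR, hts⟩ | ⟨hsR, _⟩
      · rcases hB with (h | h) | ⟨hsnR', u, huR, hsu⟩
        · exact absurd h hsnR
        · exact absurd hts.le (h t htR).2
        · exact absurd (hR htR huR hts.le hsu.le) hsnR
      · exact ⟨hsQ, hsR⟩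
  · rintro ⟨hsQ, hsR⟩
    exact ⟨Or.inr ⟨hsQ, Or.inl (Or.inl hsR)⟩, Or.inr ⟨hsR, Or.inl (Or.inl hsQ)⟩⟩
end

section
/- Let P be a partially ordered set and let Q and R be finite convex subsets of P. Then the operations ∧ and ∨ are stable: (Q ∧ R) ∧ (Q ∨ R) = Q ∧ R and (Q ∧ R) ∨ (Q ∨ R) = Q ∨ R. -/
variable {P : Type*} [PartialOrder P]

lemma inter_subset_wedge (Q R : Set P) : Q ∩ R ⊆ wedgeSet Q R := by
  rintro s ⟨hq, hr⟩
  exact Or.inr ⟨hq, Or.inl (Or.inl hr)⟩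

lemma inter_subset_vee (Q R : Set P) : Q ∩ R ⊆ veeSet Q R := by
  rintro s ⟨hq, hr⟩
  exact Or.inr ⟨hr, Or.inl (Or.inl hq)⟩

/-- Lemma A: an element of `Q ∨ R` strictly below an element of `Q ∧ R`
forces the upper element into `Q ∩ R`. -/
lemma mem_inter_of_vee_lt_wedge {Q R : Set P} (hQ : IsConvex Q) (hR : IsConvex R)
    {s t : P} (hs : s ∈ wedgeSet Q R) (ht : t ∈ veeSet Q R) (hts : t < s) :
    s ∈ Q ∩ R := by
  rcases hs with ⟨hsR, hsnQ, q, hqQ, hsq⟩ | ⟨hsQ, hsim | ⟨hsnR, r, hrR, hsr⟩⟩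
  · -- s ∈ R, s < Q
    exfalso
    rcases ht with ⟨htQ, _⟩ | ⟨htR, hsim' | ⟨htnQ, q', hq'Q, hq't⟩⟩
    · exact hsnQ (hQ htQ hqQ hts.le hsq.le)
    · rcases hsim' with htQ | hinc
      · exact hsnQ (hQ htQ hqQ hts.le hsq.le)
      · exact (hinc q hqQ).1 (hts.le.trans hsq.le)
    · exact htnQ (hQ hq'Q hqQ hq't.le (hts.le.trans hsq.le))
  · -- s ∈ Q, s ∼ R
    rcases hsim with hsR | hinc
    · exact ⟨hsQ, hsR⟩
    · exfalso
      rcases ht with ⟨htQ, htnR, r, hrR, hrt⟩ | ⟨htR, _⟩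
      · exact (hinc r hrR).2 (hrt.le.trans hts.le)
      · exact (hinc t htR).2 hts.le
  · -- s ∈ Q, s < R
    exfalso
    rcases ht with ⟨htQ, htnR, r', hr'R, hr't⟩ | ⟨htR, _⟩
    · exact htnR (hR hr'R hrR hr't.le (hts.le.trans hsr.le))
    · exact hsnR (hR htR hrR hts.le hsr.le)

/-- Lemma C: an element of `Q ∨ R` strictly below an element of `Q ∧ R`
forces the lower element into `Q ∩ R`. -/
lemma mem_inter_of_vee_lt_wedge' {Q R : Set P} (hQ : IsConvex Q) (hR : IsConvex R)
    {s t : P} (hs : s ∈ veeSet Q R) (ht : t ∈ wedgeSet Q R) (hst : s < t) :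
    s ∈ Q ∩ R := by
  rcases hs with ⟨hsQ, hsnR, r, hrR, hrs⟩ | ⟨hsR, hsim | ⟨hsnQ, q, hqQ, hqs⟩⟩
  · -- s ∈ Q, s > R
    exfalso
    rcases ht with ⟨htR, _⟩ | ⟨htQ, hsim' | ⟨htnR, r', hr'R, htr'⟩⟩
    · exact hsnR (hR hrR htR hrs.le hst.le)
    · rcases hsim' with htR | hinc
      · exact hsnR (hR hrR htR hrs.le hst.le)
      · exact (hinc r hrR).2 (hrs.le.trans hst.le)
    · exact hsnR (hR hrR hr'R hrs.le (hst.le.trans htr'.le))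
  · -- s ∈ R, s ∼ Q
    rcases hsim with hsQ | hinc
    · exact ⟨hsQ, hsR⟩
    · exfalso
      rcases ht with ⟨htR, htnQ, q, hqQ, htq⟩ | ⟨htQ, _⟩
      · exact (hinc q hqQ).1 (hst.le.trans htq.le)
      · exact (hinc t htQ).1 hst.le
  · -- s ∈ R, s > Q
    exfalso
    rcases ht with ⟨htR, htnQ, q', hq'Q, htq'⟩ | ⟨htQ, _⟩
    · exact hsnQ (hQ hqQ hq'Q hqs.le (hst.le.trans htq'.le))
    · exact hsnQ (hQ hqQ htQ hqs.le hst.le)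

/-- the operations `∧` and `∨` are stable:
`(Q ∧ R) ∧ (Q ∨ R) = Q ∧ R` and `(Q ∧ R) ∨ (Q ∨ R) = Q ∨ R`. -/
theorem wedgeSet_veeSet_stable (Q R : Set P) (hQf : Q.Finite) (hRf : R.Finite)
    (hQ : IsConvex Q) (hR : IsConvex R) :
    wedgeSet (wedgeSet Q R) (veeSet Q R) = wedgeSet Q R ∧
      veeSet (wedgeSet Q R) (veeSet Q R) = veeSet Q R := by
  constructor
  · ext s
    constructor
    · rintro (⟨hsV, hsnW, t, htW, hst⟩ | ⟨hsW, _⟩)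
      · exact absurd (inter_subset_wedge Q R
          (mem_inter_of_vee_lt_wedge' hQ hR hsV htW hst)) hsnW
      · exact hsW
    · intro hsW
      refine Or.inr ⟨hsW, ?_⟩
      by_cases hsV : s ∈ veeSet Q R
      · exact Or.inl (Or.inl hsV)
      by_cases hcmp : ∃ t ∈ veeSet Q R, s < t
      · exact Or.inr ⟨hsV, hcmp⟩
      · refine Or.inl (Or.inr fun t htV => ⟨fun hle => ?_, fun hle => ?_⟩)
        · rcases hle.lt_or_eq with h | rfl
          · exact hcmp ⟨t, htV, h⟩
          · exact hsV htV
        · rcases hle.lt_or_eq with h | rfl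
          · exact hsV (inter_subset_vee Q R (mem_inter_of_vee_lt_wedge hQ hR hsW htV h))
          · exact hsV htV
  · ext s
    constructor
    · rintro (⟨hsW, hsnV, t, htV, hts⟩ | ⟨hsV, _⟩)
      · exact absurd (inter_subset_vee Q R
          (mem_inter_of_vee_lt_wedge hQ hR hsW htV hts)) hsnV
      · exact hsV
    · intro hsV
      refine Or.inr ⟨hsV, ?_⟩
      by_cases hsW : s ∈ wedgeSet Q R
      · exact Or.inl (Or.inl hsW)
      by_cases hcmp : ∃ t ∈ wedgeSet Q R, t < s
      · exact Or.inr ⟨hsW, hcmp⟩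
      · refine Or.inl (Or.inr fun t htW => ⟨fun hle => ?_, fun hle => ?_⟩)
        · rcases hle.lt_or_eq with h | rfl
          · exact hsW (inter_subset_wedge Q R (mem_inter_of_vee_lt_wedge' hQ hR hsV htW h))
          · exact hsW htW
        · rcases hle.lt_or_eq with h | rfl
          · exact hcmp ⟨t, htW, h⟩
          · exact hsW htW
end

section
/- Let (P,O) be a T-labelled poset, let Q and R be finite convex subsets of P, let ω be a (Q,O)-tableau and σ an (R,O)-tableau. Then for every subset S ⊆ Q ∩ R, wt(ω) + wt(σ) = wt((ω ∧ σ)_S) + wt((ω ∨ σ)_S) as functions ℙ → ℕ. -/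
variable {P : Type*} [PartialOrder P]

attribute [local instance] Classical.propDecidable

/-- Embedding of the positive integers `ℙ` (modelled as `ℕ+`) into `ℤ ∪ {∞}`. -/
def toWT (n : ℕ+) : WithTop ℤ := (((n : ℕ) : ℤ) : WithTop ℤ)

/-- `ω : P → ℙ` respects the `𝕋`-labelling `O` on a (convex) subset `Q`:
for every covering relation `s ⋖ t` inside `Q` we have `ω(s) ≤ O(s,t)(ω(t))`.
(For a convex subposet, covering relations coincide with those of `P`.) -/
def IsTableau (O : P → P → ℕ+ → WithTop ℤ) (Q : Set P) (ω : P → ℕ+) : Prop :=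
  ∀ ⦃s t : P⦄, s ∈ Q → t ∈ Q → s ⋖ t → toWT (ω s) ≤ O s t (ω t)

/-- The weight of a tableau on `Q`: `wt(ω)(n) = #ω⁻¹(n)`. -/
noncomputable def wtOn (Q : Set P) (ω : P → ℕ+) (n : ℕ+) : ℕ :=
  Nat.card {x : Q // ω x = n}

/-- `(ω ∧ σ)_S`: equals `σ` on `(R \ Q) ∪ S` and `ω` elsewhere (relevant on `Q ∧ R`). -/
noncomputable def wedgeTab (Q R S : Set P) (ω σ : P → ℕ+) : P → ℕ+ :=
  fun x => if x ∈ (R \ Q) ∪ S then σ x else ω x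

/-- `(ω ∨ σ)_S`: equals `ω` on `(Q \ R) ∪ S` and `σ` elsewhere (relevant on `Q ∨ R`). -/
noncomputable def veeTab (Q R S : Set P) (ω σ : P → ℕ+) : P → ℕ+ :=
  fun x => if x ∈ (Q \ R) ∪ S then ω x else σ x


lemma not_gt_of_lt {R : Set P} (hR : IsConvex R) {x : P} (h : ltSet x R) :
    ¬ gtSet x R := by
  rintro ⟨hx, u, hu, hux⟩
  obtain ⟨hx', t, ht, hxt⟩ := h
  exact hx (hR hu ht hux.le hxt.le)

lemma sim_of_not {R : Set P} {x : P} (hx : x ∉ R) (h1 : ¬ ltSet x R)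
    (h2 : ¬ gtSet x R) : simSet x R := by
  refine Or.inr fun t ht => ⟨fun hle => ?_, fun hle => ?_⟩
  · exact h1 ⟨hx, t, ht, lt_of_le_of_ne hle (fun h => hx (h ▸ ht))⟩
  · exact h2 ⟨hx, t, ht, lt_of_le_of_ne hle (fun h : t = x => hx (h ▸ ht))⟩

lemma not_sim_of_lt {R : Set P} {x : P} (h : ltSet x R) : ¬ simSet x R := by
  obtain ⟨hx, t, ht, hxt⟩ := h
  rintro (h' | h')
  · exact hx h'
  · exact (h' t ht).1 hxt.le

lemma not_sim_of_gt {R : Set P} {x : P} (h : gtSet x R) : ¬ simSet x R := by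
  obtain ⟨hx, t, ht, hxt⟩ := h
  rintro (h' | h')
  · exact hx h'
  · exact (h' t ht).2 hxt.le

lemma wtOn_eq_ncard (Q : Set P) (ω : P → ℕ+) (n : ℕ+) :
    wtOn Q ω n = Set.ncard {x | x ∈ Q ∧ ω x = n} := by
  rw [wtOn, Set.ncard]
  exact Nat.card_congr (Equiv.subtypeSubtypeEquivSubtypeInter (· ∈ Q) (fun y => ω y = n))

/-- `wt(ω) + wt(σ) = wt((ω ∧ σ)_S) + wt((ω ∨ σ)_S)` for any `S ⊆ Q ∩ R`. -/
theorem cellTransfer_weight (O : P → P → ℕ+ → WithTop ℤ)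
    (hO : ∀ s t : P, s ⋖ t → Monotone (O s t))
    (Q R : Set P) (hQf : Q.Finite) (hRf : R.Finite)
    (hQ : IsConvex Q) (hR : IsConvex R)
    (ω σ : P → ℕ+) (hω : IsTableau O Q ω) (hσ : IsTableau O R σ)
    (S : Set P) (hS : S ⊆ Q ∩ R) :
    ∀ n : ℕ+, wtOn Q ω n + wtOn R σ n =
      wtOn (wedgeSet Q R) (wedgeTab Q R S ω σ) n +
        wtOn (veeSet Q R) (veeTab Q R S ω σ) n := by
  intro n
  set τ := wedgeTab Q R S ω σ with hτdef
  set υ := veeTab Q R S ω σ with hυdef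
  have key : ∀ x : P,
      (((x ∈ Q ∧ ω x = n) ∨ (x ∈ R ∧ σ x = n)) ↔
        ((x ∈ wedgeSet Q R ∧ τ x = n) ∨ (x ∈ veeSet Q R ∧ υ x = n)))
      ∧ (((x ∈ Q ∧ ω x = n) ∧ (x ∈ R ∧ σ x = n)) ↔
        ((x ∈ wedgeSet Q R ∧ τ x = n) ∧ (x ∈ veeSet Q R ∧ υ x = n))) := by
    intro x
    by_cases hxQ : x ∈ Q <;> by_cases hxR : x ∈ R
    · -- x ∈ Q ∩ R
      have hW : x ∈ wedgeSet Q R := Or.inr ⟨hxQ, Or.inl (Or.inl hxR)⟩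
      have hV : x ∈ veeSet Q R := Or.inr ⟨hxR, Or.inl (Or.inl hxQ)⟩
      by_cases hxS : x ∈ S
      · have h1 : τ x = σ x := by simp [hτdef, wedgeTab, hxS]
        have h2 : υ x = ω x := by simp [hυdef, veeTab, hxS]
        rw [h1, h2]
        constructor <;> constructor <;> tauto
      · have h1 : τ x = ω x := by
          simp only [hτdef, wedgeTab, Set.mem_union, Set.mem_diff]
          rw [if_neg]; tauto
        have h2 : υ x = σ x := by
          simp only [hυdef, veeTab, Set.mem_union, Set.mem_diff]
          rw [if_neg]; tauto
        rw [h1, h2]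
        constructor <;> constructor <;> tauto
    · -- x ∈ Q \ R
      have hxS : x ∉ S := fun h => hxR (hS h).2
      by_cases hgt : gtSet x R
      · have hlt : ¬ ltSet x R := fun h => not_gt_of_lt hR h hgt
        have hsim : ¬ simSet x R := not_sim_of_gt hgt
        have hV : x ∈ veeSet Q R := Or.inl ⟨hxQ, hgt⟩
        have hW : x ∉ wedgeSet Q R := by
          rintro (⟨h, _⟩ | ⟨_, (h | h)⟩) <;> [exact hxR h; exact hsim h; exact hlt h]
        have h2 : υ x = ω x := by
          simp only [hυdef, veeTab, Set.mem_union, Set.mem_diff]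
          rw [if_pos]; tauto
        rw [h2]
        constructor <;> constructor <;> tauto
      · have hQR : simSet x R ∨ ltSet x R := by
          by_cases hlt : ltSet x R
          · exact Or.inr hlt
          · exact Or.inl (sim_of_not hxR hlt hgt)
        have hW : x ∈ wedgeSet Q R := Or.inr ⟨hxQ, hQR⟩
        have hV : x ∉ veeSet Q R := by
          rintro (⟨_, h⟩ | ⟨h, _⟩) <;> [exact hgt h; exact hxR h]
        have h1 : τ x = ω x := by
          simp only [hτdef, wedgeTab, Set.mem_union, Set.mem_diff]
          rw [if_neg]; tauto
        rw [h1]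
        constructor <;> constructor <;> tauto
    · -- x ∈ R \ Q
      have hxS : x ∉ S := fun h => hxQ (hS h).1
      by_cases hlt : ltSet x Q
      · have hgt : ¬ gtSet x Q := not_gt_of_lt hQ hlt
        have hsim : ¬ simSet x Q := not_sim_of_lt hlt
        have hW : x ∈ wedgeSet Q R := Or.inl ⟨hxR, hlt⟩
        have hV : x ∉ veeSet Q R := by
          rintro (⟨h, _⟩ | ⟨_, (h | h)⟩) <;> [exact hxQ h; exact hsim h; exact hgt h]
        have h1 : τ x = σ x := by
          simp only [hτdef, wedgeTab, Set.mem_union, Set.mem_diff]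
          rw [if_pos]; tauto
        rw [h1]
        constructor <;> constructor <;> tauto
      · have hQR : simSet x Q ∨ gtSet x Q := by
          by_cases hgt : gtSet x Q
          · exact Or.inr hgt
          · exact Or.inl (sim_of_not hxQ hlt hgt)
        have hV : x ∈ veeSet Q R := Or.inr ⟨hxR, hQR⟩
        have hW : x ∉ wedgeSet Q R := by
          rintro (⟨_, h⟩ | ⟨h, _⟩) <;> [exact hlt h; exact hxQ h]
        have h2 : υ x = σ x := by
          simp only [hυdef, veeTab, Set.mem_union, Set.mem_diff]
          rw [if_neg]; tauto
        rw [h2]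
        constructor <;> constructor <;> tauto
    · -- x ∉ Q ∪ R
      have hW : x ∉ wedgeSet Q R := by rintro (⟨h, _⟩ | ⟨h, _⟩) <;> [exact hxR h; exact hxQ h]
      have hV : x ∉ veeSet Q R := by rintro (⟨h, _⟩ | ⟨h, _⟩) <;> [exact hxQ h; exact hxR h]
      constructor <;> constructor <;> tauto
  -- set up the counting
  set A : Set P := {x | x ∈ Q ∧ ω x = n}
  set B : Set P := {x | x ∈ R ∧ σ x = n}
  set C : Set P := {x | x ∈ wedgeSet Q R ∧ τ x = n}
  set D : Set P := {x | x ∈ veeSet Q R ∧ υ x = n}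
  have hWQR : wedgeSet Q R ⊆ Q ∪ R := by
    rintro x (⟨h, _⟩ | ⟨h, _⟩) <;> [exact Or.inr h; exact Or.inl h]
  have hVQR : veeSet Q R ⊆ Q ∪ R := by
    rintro x (⟨h, _⟩ | ⟨h, _⟩) <;> [exact Or.inl h; exact Or.inr h]
  have hAf : A.Finite := hQf.subset fun x hx => hx.1
  have hBf : B.Finite := hRf.subset fun x hx => hx.1
  have hCf : C.Finite := (hQf.union hRf).subset fun x hx => hWQR hx.1
  have hDf : D.Finite := (hQf.union hRf).subset fun x hx => hVQR hx.1
  have hunion : A ∪ B = C ∪ D := by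
    ext x; exact (key x).1
  have hinter : A ∩ B = C ∩ D := by
    ext x; exact (key x).2
  rw [wtOn_eq_ncard, wtOn_eq_ncard, wtOn_eq_ncard, wtOn_eq_ncard]
  rw [← Set.ncard_union_add_ncard_inter A B hAf hBf,
    ← Set.ncard_union_add_ncard_inter C D hCf hDf, hunion, hinter]
end

section
/- Let (P,O) be a T-labelled poset, let Q and R be finite convex subsets of P, let ω be a (Q,O)-tableau and σ an (R,O)-tableau, and let S* = bd(Q)⁺ ∪ bd(R)⁺. Then both (ω ∧ σ)_{S*} and (ω ∨ σ)_{S*} respect O, i.e., (ω ∧ σ)_{S*} is a (Q ∧ R, O)-tableau and (ω ∨ σ)_{S*} is a (Q ∨ R, O)-tableau. -/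
variable {P : Type*} [PartialOrder P]

attribute [local instance] Classical.propDecidable

/-- `(Q ∩ R)⁺ = {x ∈ Q ∩ R | ω(x) < σ(x)}`. -/
def plusSet (Q R : Set P) (ω σ : P → ℕ+) : Set P := {x | x ∈ Q ∩ R ∧ ω x < σ x}

/-- Adjacency in the graph induced on `A` from the Hasse diagram of `P`. -/
def hasseAdj (A : Set P) (x y : P) : Prop := x ∈ A ∧ y ∈ A ∧ (x ⋖ y ∨ y ⋖ x)

/-- `bd(R) = {x ∈ Q ∩ R | x ⋗ y for some y ∈ R \ Q}`, the lower boundary. -/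
def bdLower (Q R : Set P) : Set P := {x | x ∈ Q ∩ R ∧ ∃ y ∈ R \ Q, y ⋖ x}

/-- `bd(Q) = {x ∈ Q ∩ R | x ⋖ y for some y ∈ Q \ R}`, the upper boundary. -/
def bdUpper (Q R : Set P) : Set P := {x | x ∈ Q ∩ R ∧ ∃ y ∈ Q \ R, x ⋖ y}

/-- The union of the connected components of `(Q ∩ R)⁺` meeting `B`. -/
def bdPlus (Q R : Set P) (ω σ : P → ℕ+) (B : Set P) : Set P :=
  {x | x ∈ plusSet Q R ω σ ∧
    ∃ y ∈ B, Relation.ReflTransGen (hasseAdj (plusSet Q R ω σ)) x y}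

/-- `S* = bd(Q)⁺ ∪ bd(R)⁺`. -/
def sStar (Q R : Set P) (ω σ : P → ℕ+) : Set P :=
  bdPlus Q R ω σ (bdUpper Q R) ∪ bdPlus Q R ω σ (bdLower Q R)

/-- `S ⊆ S*` is transferrable for `(ω,σ)` if both `(ω ∧ σ)_S` and `(ω ∨ σ)_S` respect `O`. -/
def Transferrable (O : P → P → ℕ+ → WithTop ℤ) (Q R : Set P) (ω σ : P → ℕ+)
    (S : Set P) : Prop :=
  S ⊆ sStar Q R ω σ ∧ IsTableau O (wedgeSet Q R) (wedgeTab Q R S ω σ) ∧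
    IsTableau O (veeSet Q R) (veeTab Q R S ω σ)

lemma toWT_le_toWT {a b : ℕ+} (h : a ≤ b) : toWT a ≤ toWT b := by
  simp only [toWT]
  exact_mod_cast h

lemma sStar_subset_plus (Q R : Set P) (ω σ : P → ℕ+) :
    sStar Q R ω σ ⊆ plusSet Q R ω σ := by
  rintro x (⟨hx, _⟩ | ⟨hx, _⟩) <;> exact hx

lemma adj_mem_sStar {Q R : Set P} {ω σ : P → ℕ+} {x y : P}
    (hx : x ∈ sStar Q R ω σ) (hadj : hasseAdj (plusSet Q R ω σ) y x) :
    y ∈ sStar Q R ω σ := by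
  rcases hx with ⟨_, b, hb, hpath⟩ | ⟨_, b, hb, hpath⟩
  · exact Or.inl ⟨hadj.1, b, hb, Relation.ReflTransGen.head hadj hpath⟩
  · exact Or.inr ⟨hadj.1, b, hb, Relation.ReflTransGen.head hadj hpath⟩

/-- If `s ∈ R`, `s < t` and `t ∈ Q ∧ R` then `t ∈ R` (using convexity of `R`). -/
lemma mem_R_of_wedge {Q R : Set P} (hR : IsConvex R) {s t : P}
    (hsR : s ∈ R) (hst : s < t) (ht : t ∈ wedgeSet Q R) : t ∈ R := by
  rcases ht with ⟨htR, _⟩ | ⟨_, hsim | hlt⟩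
  · exact htR
  · rcases hsim with htR | hinc
    · exact htR
    · exact absurd hst.le (hinc s hsR).2
  · rcases hlt with ⟨htR, u, huR, htu⟩
    exact absurd (hR hsR huR hst.le htu.le) htR

/-- If `t ∈ Q`, `s < t` and `s ∈ Q ∨ R` then `s ∈ Q` (using convexity of `Q`). -/
lemma mem_Q_of_vee {Q R : Set P} (hQ : IsConvex Q) {s t : P}
    (htQ : t ∈ Q) (hst : s < t) (hs : s ∈ veeSet Q R) : s ∈ Q := by
  rcases hs with ⟨hsQ, _⟩ | ⟨_, hsim | hgt⟩
  · exact hsQ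
  · rcases hsim with h | hinc
    · exact h
    · exact absurd hst.le (hinc t htQ).1
  · rcases hgt with ⟨hsQ', u, huQ, hus⟩
    exact absurd (hQ huQ htQ hus.le hst.le) hsQ'

/-- both `(ω ∧ σ)_{S*}` and `(ω ∨ σ)_{S*}` respect `O`. -/
theorem sStar_respects (O : P → P → ℕ+ → WithTop ℤ)
    (hO : ∀ s t : P, s ⋖ t → Monotone (O s t))
    (Q R : Set P) (hQf : Q.Finite) (hRf : R.Finite)
    (hQ : IsConvex Q) (hR : IsConvex R)
    (ω σ : P → ℕ+) (hω : IsTableau O Q ω) (hσ : IsTableau O R σ) :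
    IsTableau O (wedgeSet Q R) (wedgeTab Q R (sStar Q R ω σ) ω σ) ∧
      IsTableau O (veeSet Q R) (veeTab Q R (sStar Q R ω σ) ω σ) := by
  set S : Set P := sStar Q R ω σ with hSdef
  have hSplus : S ⊆ plusSet Q R ω σ := sStar_subset_plus Q R ω σ
  have hSsub : ∀ x ∈ S, x ∈ Q ∩ R := fun x hx => (hSplus hx).1
  constructor
  · -- wedge part
    intro s t hs ht hst
    simp only [wedgeTab]
    by_cases hs' : s ∈ (R \ Q) ∪ S <;> by_cases ht' : t ∈ (R \ Q) ∪ S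
    · rw [if_pos hs', if_pos ht']
      have hsR : s ∈ R := by
        rcases hs' with h | h
        exacts [h.1, (hSsub s h).2]
      have htR : t ∈ R := by
        rcases ht' with h | h
        exacts [h.1, (hSsub t h).2]
      exact hσ hsR htR hst
    · rw [if_pos hs', if_neg ht']
      -- τ s = σ s, τ t = ω t
      have htQ : t ∈ Q := by
        rcases ht with ⟨htR2, hnQ, _⟩ | ⟨htQ, _⟩
        · exact absurd (Or.inl ⟨htR2, hnQ⟩) ht'
        · exact htQ
      have htS : t ∉ S := fun h => ht' (Or.inr h)
      have hsR : s ∈ R := by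
        rcases hs' with h | h
        exacts [h.1, (hSsub s h).2]
      have htR : t ∈ R := mem_R_of_wedge hR hsR hst.lt ht
      have htnp : t ∉ plusSet Q R ω σ := by
        intro htp
        rcases hs' with ⟨hsR', hsQ'⟩ | hsS
        · -- s ∈ R \ Q : t is a lower-boundary point
          exact htS (Or.inr ⟨htp, t, ⟨⟨htQ, htR⟩, s, ⟨hsR', hsQ'⟩, hst⟩,
            Relation.ReflTransGen.refl⟩)
        · -- s ∈ S : t is adjacent to s in the plus graph
          exact htS (adj_mem_sStar hsS ⟨htp, hSplus hsS, Or.inr hst⟩)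
      have hts : σ t ≤ ω t := not_lt.mp fun h => htnp ⟨⟨htQ, htR⟩, h⟩
      exact le_trans (hσ hsR htR hst) (hO s t hst hts)
    · rw [if_neg hs', if_pos ht']
      -- τ s = ω s, τ t = σ t
      have hsQ : s ∈ Q := by
        rcases hs with ⟨hsR, hnQ, _⟩ | ⟨hsQ, _⟩
        · exact absurd (Or.inl ⟨hsR, hnQ⟩) hs'
        · exact hsQ
      rcases ht' with ⟨htR, htQ'⟩ | htS
      · -- t ∈ R \ Q : impossible since t < Q and s ∈ Q, s < t
        rcases ht with ⟨_, _, u, huQ, htu⟩ | ⟨htQ, _⟩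
        · exact absurd (hQ hsQ huQ hst.lt.le htu.le) htQ'
        · exact absurd htQ htQ'
      · have htp := hSplus htS
        exact le_trans (hω hsQ htp.1.1 hst) (hO s t hst htp.2.le)
    · rw [if_neg hs', if_neg ht']
      have hsQ : s ∈ Q := by
        rcases hs with ⟨hsR, hnQ, _⟩ | ⟨hsQ, _⟩
        · exact absurd (Or.inl ⟨hsR, hnQ⟩) hs'
        · exact hsQ
      have htQ : t ∈ Q := by
        rcases ht with ⟨htR, hnQ, _⟩ | ⟨htQ, _⟩
        · exact absurd (Or.inl ⟨htR, hnQ⟩) ht'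
        · exact htQ
      exact hω hsQ htQ hst
  · -- vee part
    intro s t hs ht hst
    simp only [veeTab]
    by_cases hs' : s ∈ (Q \ R) ∪ S <;> by_cases ht' : t ∈ (Q \ R) ∪ S
    · rw [if_pos hs', if_pos ht']
      have hsQ : s ∈ Q := by
        rcases hs' with h | h
        exacts [h.1, (hSsub s h).1]
      have htQ : t ∈ Q := by
        rcases ht' with h | h
        exacts [h.1, (hSsub t h).1]
      exact hω hsQ htQ hst
    · rw [if_pos hs', if_neg ht']
      -- τ s = ω s, τ t = σ t
      have htR : t ∈ R := by
        rcases ht with ⟨htQ, hnR, _⟩ | ⟨htR, _⟩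
        · exact absurd (Or.inl ⟨htQ, hnR⟩) ht'
        · exact htR
      rcases hs' with ⟨hsQ, hsR'⟩ | hsS
      · -- s ∈ Q \ R : impossible since s > R and t ∈ R, s < t
        rcases hs with ⟨_, _, u, huR, hus⟩ | ⟨hsR, _⟩
        · exact absurd (hR huR htR hus.le hst.lt.le) hsR'
        · exact absurd hsR hsR'
      · have hsp := hSplus hsS
        exact le_trans (toWT_le_toWT hsp.2.le) (hσ hsp.1.2 htR hst)
    · rw [if_neg hs', if_pos ht']
      -- τ s = σ s, τ t = ω t
      have hsR : s ∈ R := by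
        rcases hs with ⟨hsQ, hnR, _⟩ | ⟨hsR, _⟩
        · exact absurd (Or.inl ⟨hsQ, hnR⟩) hs'
        · exact hsR
      have hsS : s ∉ S := fun h => hs' (Or.inr h)
      have htQ : t ∈ Q := by
        rcases ht' with h | h
        exacts [h.1, (hSsub t h).1]
      have hsQ : s ∈ Q := mem_Q_of_vee hQ htQ hst.lt hs
      have hsnp : s ∉ plusSet Q R ω σ := by
        intro hsp
        rcases ht' with ⟨htQ', htR'⟩ | htS
        · -- t ∈ Q \ R : s is an upper-boundary point
          exact hsS (Or.inl ⟨hsp, s, ⟨⟨hsQ, hsR⟩, t, ⟨htQ', htR'⟩, hst⟩,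
            Relation.ReflTransGen.refl⟩)
        · exact hsS (adj_mem_sStar htS ⟨hsp, hSplus htS, Or.inl hst⟩)
      have hss : σ s ≤ ω s := not_lt.mp fun h => hsnp ⟨⟨hsQ, hsR⟩, h⟩
      exact le_trans (toWT_le_toWT hss) (hω hsQ htQ hst)
    · rw [if_neg hs', if_neg ht']
      have hsR : s ∈ R := by
        rcases hs with ⟨hsQ, hnR, _⟩ | ⟨hsR, _⟩
        · exact absurd (Or.inl ⟨hsQ, hnR⟩) hs'
        · exact hsR
      have htR : t ∈ R := by
        rcases ht with ⟨htQ, hnR, _⟩ | ⟨htR, _⟩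
        · exact absurd (Or.inl ⟨htQ, hnR⟩) ht'
        · exact htR
      exact hσ hsR htR hst
end

section
/- Let (P,O) be a T-labelled poset, let Q and R be finite convex subsets of P, let ω be a (Q,O)-tableau and σ an (R,O)-tableau. If S' ⊆ S* and S'' ⊆ S* are both transferrable for (ω,σ), then S' ∩ S'' is transferrable for (ω,σ). -/
variable {P : Type*} [PartialOrder P]

attribute [local instance] Classical.propDecidable

lemma toWT_mono {n m : ℕ+} (h : n ≤ m) : toWT n ≤ toWT m := by
  simp only [toWT]
  exact_mod_cast (show ((n:ℕ):ℤ) ≤ ((m:ℕ):ℤ) by exact_mod_cast h)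

/-- the intersection of two transferrable subsets is transferrable. -/
theorem transferrable_inter (O : P → P → ℕ+ → WithTop ℤ)
    (hO : ∀ s t : P, s ⋖ t → Monotone (O s t))
    (Q R : Set P) (hQf : Q.Finite) (hRf : R.Finite)
    (hQ : IsConvex Q) (hR : IsConvex R)
    (ω σ : P → ℕ+) (hω : IsTableau O Q ω) (hσ : IsTableau O R σ)
    (S₁ S₂ : Set P) (h₁ : Transferrable O Q R ω σ S₁)
    (h₂ : Transferrable O Q R ω σ S₂) :
    Transferrable O Q R ω σ (S₁ ∩ S₂) := by
  obtain ⟨hS₁, hw₁, hv₁⟩ := h₁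
  obtain ⟨hS₂, hw₂, hv₂⟩ := h₂
  have hlt : ∀ x, x ∈ S₁ ∪ S₂ → ω x < σ x := by
    intro x hx
    rcases hx with hx | hx
    · rcases hS₁ hx with h | h <;> exact h.1.2
    · rcases hS₂ hx with h | h <;> exact h.1.2
  have hmin : ∀ x, wedgeTab Q R (S₁ ∩ S₂) ω σ x
      = min (wedgeTab Q R S₁ ω σ x) (wedgeTab Q R S₂ ω σ x) := by
    intro x
    simp only [wedgeTab, Set.mem_union, Set.mem_inter_iff]
    by_cases h1 : x ∈ S₁ <;> by_cases h2 : x ∈ S₂ <;> by_cases hd : x ∈ R \ Q <;>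
      simp [h1, h2, hd] <;>
      exact le_of_lt (hlt x (by tauto))
  have hmax : ∀ x, veeTab Q R (S₁ ∩ S₂) ω σ x
      = max (veeTab Q R S₁ ω σ x) (veeTab Q R S₂ ω σ x) := by
    intro x
    simp only [veeTab, Set.mem_union, Set.mem_inter_iff]
    by_cases h1 : x ∈ S₁ <;> by_cases h2 : x ∈ S₂ <;> by_cases hd : x ∈ Q \ R <;>
      simp [h1, h2, hd] <;>
      exact le_of_lt (hlt x (by tauto))
  refine ⟨fun x hx => hS₁ hx.1, ?_, ?_⟩
  · intro s t hs ht hst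
    rcases min_cases (wedgeTab Q R S₁ ω σ t) (wedgeTab Q R S₂ ω σ t) with ⟨he, _⟩ | ⟨he, _⟩
    · calc toWT (wedgeTab Q R (S₁ ∩ S₂) ω σ s)
          ≤ toWT (wedgeTab Q R S₁ ω σ s) := toWT_mono (le_trans (le_of_eq (hmin s)) (min_le_left _ _))
        _ ≤ O s t (wedgeTab Q R S₁ ω σ t) := hw₁ hs ht hst
        _ = O s t (wedgeTab Q R (S₁ ∩ S₂) ω σ t) := by rw [hmin t, he]
    · calc toWT (wedgeTab Q R (S₁ ∩ S₂) ω σ s)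
          ≤ toWT (wedgeTab Q R S₂ ω σ s) := toWT_mono (le_trans (le_of_eq (hmin s)) (min_le_right _ _))
        _ ≤ O s t (wedgeTab Q R S₂ ω σ t) := hw₂ hs ht hst
        _ = O s t (wedgeTab Q R (S₁ ∩ S₂) ω σ t) := by rw [hmin t, he]
  · intro s t hs ht hst
    rcases max_cases (veeTab Q R S₁ ω σ s) (veeTab Q R S₂ ω σ s) with ⟨he, _⟩ | ⟨he, _⟩
    · calc toWT (veeTab Q R (S₁ ∩ S₂) ω σ s)
          = toWT (veeTab Q R S₁ ω σ s) := by rw [hmax s, he]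
        _ ≤ O s t (veeTab Q R S₁ ω σ t) := hv₁ hs ht hst
        _ ≤ O s t (veeTab Q R (S₁ ∩ S₂) ω σ t) := hO s t hst (le_trans (le_max_left _ _) (le_of_eq (hmax t).symm))
    · calc toWT (veeTab Q R (S₁ ∩ S₂) ω σ s)
          = toWT (veeTab Q R S₂ ω σ s) := by rw [hmax s, he]
        _ ≤ O s t (veeTab Q R S₂ ω σ t) := hv₂ hs ht hst
        _ ≤ O s t (veeTab Q R (S₁ ∩ S₂) ω σ t) := hO s t hst (le_trans (le_max_right _ _) (le_of_eq (hmax t).symm))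
end

section
/- (Cell Transfer Theorem.) Let (P,O) be a T-labelled poset and let Q and R be finite convex subsets of P. Then for every finitely supported function d : ℙ → ℕ, the number of pairs (α,β) with α ∈ A(Q ∧ R, O), β ∈ A(Q ∨ R, O) and wt(α) + wt(β) = d is greater than or equal to the number of pairs (ω,σ) with ω ∈ A(Q,O), σ ∈ A(R,O) and wt(ω) + wt(σ) = d. Equivalently, the difference K_{Q∧R,O} K_{Q∨R,O} − K_{Q,O} K_{R,O} of generating functions is monomial-positive. -/
variable {P : Type*} [PartialOrder P]

/-- A `(Q,O)`-tableau, as a map `Q → ℙ` respecting the labelling `O` on covering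
relations of the convex subposet `Q` (these coincide with coverings in `P`). -/
def IsTableauOn (O : P → P → ℕ+ → WithTop ℤ) (Q : Set P) (f : Q → ℕ+) : Prop :=
  ∀ s t : Q, (s : P) ⋖ (t : P) → toWT (f s) ≤ O (s : P) (t : P) (f t)

/-- The weight `wt(f)(n) = #f⁻¹(n)` of a tableau `f : Q → ℙ`. -/
noncomputable def wtFun {α : Type*} (f : α → ℕ+) (n : ℕ+) : ℕ :=
  Nat.card {x : α // f x = n}

namespace CT

lemma toWT_le_iff {a b : ℕ+} : toWT a ≤ toWT b ↔ a ≤ b := by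
  simp [toWT]

lemma toWT_mono {a b : ℕ+} (h : a ≤ b) : toWT a ≤ toWT b := toWT_le_iff.mpr h

attribute [local instance] Classical.propDecidable

variable (O : P → P → ℕ+ → WithTop ℤ) (Q R : Set P)

/-- The swap region used in the cell transfer injection. -/
inductive Swap (w s : P → ℕ+) : P → Prop
  | seed1 {a t : P} (haR : a ∈ R) (haQ : a ∉ Q) (htQ : t ∈ Q) (htR : t ∈ R)
      (hc : a ⋖ t) (h : ¬ toWT (s a) ≤ O a t (w t)) : Swap w s t
  | seed2 {u t : P} (huQ : u ∈ Q) (huR : u ∈ R) (htQ : t ∈ Q) (htR : t ∉ R)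
      (hc : u ⋖ t) (h : ¬ toWT (s u) ≤ O u t (w t)) : Swap w s u
  | up {u t : P} (hu : Swap w s u) (htQ : t ∈ Q) (htR : t ∈ R)
      (hc : u ⋖ t) (h : ¬ toWT (s u) ≤ O u t (w t)) : Swap w s t
  | down {u t : P} (ht : Swap w s t) (huQ : u ∈ Q) (huR : u ∈ R)
      (hc : u ⋖ t) (h : ¬ toWT (s u) ≤ O u t (w t)) : Swap w s u

variable {O Q R}

lemma Swap.memQR {w s : P → ℕ+} {p : P} (h : Swap O Q R w s p) : p ∈ Q ∧ p ∈ R := by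
  induction h with
  | seed1 haR haQ htQ htR hc h => exact ⟨htQ, htR⟩
  | seed2 huQ huR htQ htR hc h => exact ⟨huQ, huR⟩
  | up hu htQ htR hc h _ => exact ⟨htQ, htR⟩
  | down ht huQ huR hc h _ => exact ⟨huQ, huR⟩

/-- tableau property of a total function on a set -/
def Tab (O' : P → P → ℕ+ → WithTop ℤ) (w : P → ℕ+) (S : Set P) : Prop :=
  ∀ p q : P, p ∈ S → q ∈ S → p ⋖ q → toWT (w p) ≤ O' p q (w q)

variable {w s : P → ℕ+}

lemma Swap.lt (hO : ∀ s t : P, s ⋖ t → Monotone (O s t))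
    (hw : Tab O w Q) (hs : Tab O s R) {p : P} (h : Swap O Q R w s p) : w p < s p := by
  have key : ∀ {u t : P}, u ⋖ t → ¬ toWT (s u) ≤ O u t (w t) →
      toWT (s u) ≤ O u t (s t) → w t < s t := by
    intro u t hc h h2
    by_contra hle
    exact h (le_trans h2 (hO u t hc (not_lt.mp hle)))
  have key2 : ∀ {u t : P}, ¬ toWT (s u) ≤ O u t (w t) →
      toWT (w u) ≤ O u t (w t) → w u < s u := by
    intro u t h h2
    by_contra hle
    exact h (le_trans (toWT_mono (not_lt.mp hle)) h2)
  induction h with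
  | seed1 haR haQ htQ htR hc h => exact key hc h (hs _ _ haR htR hc)
  | seed2 huQ huR htQ htR hc h => exact key2 h (hw _ _ huQ htQ hc)
  | up hu htQ htR hc h _ => exact key hc h (hs _ _ hu.memQR.2 htR hc)
  | down ht huQ huR hc h _ => exact key2 h (hw _ _ huQ ht.memQR.1 hc)

section Geom
variable {Q R : Set P} {p q : P}

lemma mem_wedge_inter (hp : p ∈ Q) (hp' : p ∈ R) : p ∈ wedgeSet Q R :=
  Or.inr ⟨hp, Or.inl (Or.inl hp')⟩

lemma mem_vee_inter (hp : p ∈ Q) (hp' : p ∈ R) : p ∈ veeSet Q R :=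
  Or.inr ⟨hp', Or.inl (Or.inl hp)⟩

lemma mem_wedge_of_lt (hpR : p ∈ R) (hpQ : p ∉ Q) (hq : q ∈ Q) (h : p < q) :
    p ∈ wedgeSet Q R := Or.inl ⟨hpR, hpQ, q, hq, h⟩

lemma mem_vee_of_gt (hpQ : p ∈ Q) (hpR : p ∉ R) (hq : q ∈ R) (h : q < p) :
    p ∈ veeSet Q R := Or.inl ⟨hpQ, hpR, q, hq, h⟩

lemma of_mem_wedge_not_Q (hp : p ∈ wedgeSet Q R) (h : p ∉ Q) : p ∈ R ∧ ltSet p Q := by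
  rcases hp with h1 | h1
  · exact h1
  · exact absurd h1.1 h

lemma of_mem_vee_not_R (hp : p ∈ veeSet Q R) (h : p ∉ R) : p ∈ Q ∧ gtSet p R := by
  rcases hp with h1 | h1
  · exact h1
  · exact absurd h1.1 h

lemma of_mem_wedge_not_R (hp : p ∈ wedgeSet Q R) (h : p ∉ R) :
    p ∈ Q ∧ (simSet p R ∨ ltSet p R) := by
  rcases hp with h1 | h1
  · exact absurd h1.1 h
  · exact h1

lemma of_mem_vee_not_Q (hp : p ∈ veeSet Q R) (h : p ∉ Q) :
    p ∈ R ∧ (simSet p Q ∨ gtSet p Q) := by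
  rcases hp with h1 | h1
  · exact absurd h1.1 h
  · exact h1

/-- below an element of `Q`, inside `Q`: no `ltSet q Q` above. -/
lemma not_ltSet_above (hQ : IsConvex Q) (hp : p ∈ Q) (h : p < q) : ¬ ltSet q Q := by
  rintro ⟨hq, t, ht, hqt⟩
  exact hq (hQ hp ht h.le hqt.le)

lemma not_gtSet_below (hQ : IsConvex Q) (hq : q ∈ Q) (h : p < q) : ¬ gtSet p Q := by
  rintro ⟨hp, t, ht, htp⟩
  exact hp (hQ ht hq htp.le h.le)

lemma not_simSet_above (hp : p ∈ R) (hq : q ∉ R) (h : p < q) : ¬ simSet q R := by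
  rintro (h1 | h1)
  · exact hq h1
  · exact (h1 p hp).2 h.le

lemma not_simSet_below (hq : q ∈ R) (hp : p ∉ R) (h : p < q) : ¬ simSet p R := by
  rintro (h1 | h1)
  · exact hp h1
  · exact (h1 q hq).1 h.le

lemma not_ltSet_above' (hR : IsConvex R) (hp : p ∈ R) (hq : q ∉ R) (h : p < q) :
    ¬ ltSet q R := by
  rintro ⟨_, t, ht, hqt⟩
  exact hq (hR hp ht h.le hqt.le)

lemma not_gtSet_below' (hR : IsConvex R) (hq : q ∈ R) (hp : p ∉ R) (h : p < q) :
    ¬ gtSet p R := by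
  rintro ⟨_, t, ht, htp⟩
  exact hp (hR ht hq htp.le h.le)

lemma lt_gt_exclusive (hR : IsConvex R) : ¬ (ltSet p R ∧ gtSet p R) := by
  rintro ⟨⟨h1, t, ht, hpt⟩, ⟨h2, u, hu, hup⟩⟩
  exact h1 (hR hu ht hup.le hpt.le)

lemma sim_gt_exclusive (hp : p ∉ R) (h : simSet p R) : ¬ gtSet p R := by
  rintro ⟨_, t, ht, htp⟩
  rcases h with h1 | h1
  · exact hp h1
  · exact (h1 t ht).2 htp.le

lemma sim_lt_exclusive (hp : p ∉ R) (h : simSet p R) : ¬ ltSet p R := by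
  rintro ⟨_, t, ht, hpt⟩
  rcases h with h1 | h1
  · exact hp h1
  · exact (h1 t ht).1 hpt.le

lemma sim_or_lt_of_not_gt (hp : p ∉ R) (hg : ¬ gtSet p R) : simSet p R ∨ ltSet p R := by
  by_cases h : ∃ t ∈ R, p < t
  · obtain ⟨t, ht, hpt⟩ := h
    exact Or.inr ⟨hp, t, ht, hpt⟩
  · push_neg at h
    refine Or.inl (Or.inr fun t ht => ⟨fun hle => ?_, fun hle => ?_⟩)
    · exact h t ht (lt_of_le_of_ne hle (fun he => hp (he ▸ ht)))
    · exact hg ⟨hp, t, ht, lt_of_le_of_ne hle (fun he => hp (he ▸ ht))⟩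

lemma sim_or_gt_of_not_lt (hp : p ∉ Q) (hg : ¬ ltSet p Q) : simSet p Q ∨ gtSet p Q := by
  by_cases h : ∃ t ∈ Q, t < p
  · obtain ⟨t, ht, hpt⟩ := h
    exact Or.inr ⟨hp, t, ht, hpt⟩
  · push_neg at h
    refine Or.inl (Or.inr fun t ht => ⟨fun hle => ?_, fun hle => ?_⟩)
    · exact hg ⟨hp, t, ht, lt_of_le_of_ne hle (fun he => hp (he ▸ ht))⟩
    · exact h t ht (lt_of_le_of_ne hle (fun he => hp (he.symm ▸ ht)))

lemma wedge_subset : wedgeSet Q R ⊆ Q ∪ R := by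
  rintro p (h | h)
  · exact Or.inr h.1
  · exact Or.inl h.1

lemma vee_subset : veeSet Q R ⊆ Q ∪ R := by
  rintro p (h | h)
  · exact Or.inl h.1
  · exact Or.inr h.1

end Geom

section Main

variable (O : P → P → ℕ+ → WithTop ℤ) (Q R : Set P) (w s : P → ℕ+)

/-- lower combined tableau, on `Q ∧ R` -/
noncomputable def Af (p : P) : ℕ+ :=
  if Swap O Q R w s p then s p else if p ∈ Q then w p else s p

/-- upper combined tableau, on `Q ∨ R` -/
noncomputable def Bf (p : P) : ℕ+ :=
  if Swap O Q R w s p then w p else if p ∈ R then s p else w p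

variable {O Q R w s}

lemma Af_tab (hO : ∀ s t : P, s ⋖ t → Monotone (O s t))
    (hQ : IsConvex Q) (hR : IsConvex R)
    (hw : Tab O w Q) (hs : Tab O s R) : Tab O (Af O Q R w s) (wedgeSet Q R) := by
  intro p q hp hq hc
  have hpq := hc.lt
  by_cases hXp : Swap O Q R w s p <;> by_cases hXq : Swap O Q R w s q
  · rw [Af, Af, if_pos hXp, if_pos hXq]
    exact hs p q hXp.memQR.2 hXq.memQR.2 hc
  · obtain ⟨hpQ, hpR⟩ := hXp.memQR
    by_cases hqQ : q ∈ Q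
    · by_cases hqR : q ∈ R
      · rw [Af, Af, if_pos hXp, if_neg hXq, if_pos hqQ]
        by_contra h
        exact hXq (Swap.up hXp hqQ hqR hc h)
      · rcases (of_mem_wedge_not_R hq hqR).2 with h1 | h1
        · exact absurd h1 (not_simSet_above hpR hqR hpq)
        · exact absurd h1 (not_ltSet_above' hR hpR hqR hpq)
    · exact absurd (of_mem_wedge_not_Q hq hqQ).2 (not_ltSet_above hQ hpQ hpq)
  · obtain ⟨hqQ, hqR⟩ := hXq.memQR
    rw [Af, Af, if_neg hXp, if_pos hXq]
    by_cases hpQ : p ∈ Q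
    · rw [if_pos hpQ]
      exact le_trans (hw p q hpQ hqQ hc) (hO p q hc (Swap.lt hO hw hs hXq).le)
    · rw [if_neg hpQ]
      exact hs p q (of_mem_wedge_not_Q hp hpQ).1 hqR hc
  · by_cases hpQ : p ∈ Q
    · by_cases hqQ : q ∈ Q
      · rw [Af, Af, if_neg hXp, if_neg hXq, if_pos hpQ, if_pos hqQ]
        exact hw p q hpQ hqQ hc
      · exact absurd (of_mem_wedge_not_Q hq hqQ).2 (not_ltSet_above hQ hpQ hpq)
    · obtain ⟨hpR, -⟩ := of_mem_wedge_not_Q hp hpQ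
      by_cases hqQ : q ∈ Q
      · by_cases hqR : q ∈ R
        · rw [Af, Af, if_neg hXp, if_neg hXq, if_neg hpQ, if_pos hqQ]
          by_contra h
          exact hXq (Swap.seed1 hpR hpQ hqQ hqR hc h)
        · rcases (of_mem_wedge_not_R hq hqR).2 with h1 | h1
          · exact absurd h1 (not_simSet_above hpR hqR hpq)
          · exact absurd h1 (not_ltSet_above' hR hpR hqR hpq)
      · rw [Af, Af, if_neg hXp, if_neg hXq, if_neg hpQ, if_neg hqQ]
        exact hs p q hpR (of_mem_wedge_not_Q hq hqQ).1 hc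

lemma Bf_tab (hO : ∀ s t : P, s ⋖ t → Monotone (O s t))
    (hQ : IsConvex Q) (hR : IsConvex R)
    (hw : Tab O w Q) (hs : Tab O s R) : Tab O (Bf O Q R w s) (veeSet Q R) := by
  intro p q hp hq hc
  have hpq := hc.lt
  by_cases hXp : Swap O Q R w s p <;> by_cases hXq : Swap O Q R w s q
  · rw [Bf, Bf, if_pos hXp, if_pos hXq]
    exact hw p q hXp.memQR.1 hXq.memQR.1 hc
  · obtain ⟨hpQ, hpR⟩ := hXp.memQR
    rw [Bf, Bf, if_pos hXp, if_neg hXq]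
    by_cases hqR : q ∈ R
    · rw [if_pos hqR]
      exact le_trans (toWT_mono (Swap.lt hO hw hs hXp).le) (hs p q hpR hqR hc)
    · rw [if_neg hqR]
      exact hw p q hpQ (of_mem_vee_not_R hq hqR).1 hc
  · obtain ⟨hqQ, hqR⟩ := hXq.memQR
    by_cases hpR : p ∈ R
    · by_cases hpQ : p ∈ Q
      · rw [Bf, Bf, if_neg hXp, if_pos hXq, if_pos hpR]
        by_contra h
        exact hXp (Swap.down hXq hpQ hpR hc h)
      · rcases (of_mem_vee_not_Q hp hpQ).2 with h1 | h1
        · exact absurd h1 (not_simSet_below hqQ hpQ hpq)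
        · exact absurd h1 (not_gtSet_below hQ hqQ hpq)
    · rw [Bf, Bf, if_neg hXp, if_pos hXq, if_neg hpR]
      exact hw p q (of_mem_vee_not_R hp hpR).1 hqQ hc
  · by_cases hpR : p ∈ R
    · by_cases hqR : q ∈ R
      · rw [Bf, Bf, if_neg hXp, if_neg hXq, if_pos hpR, if_pos hqR]
        exact hs p q hpR hqR hc
      · obtain ⟨hqQ, -⟩ := of_mem_vee_not_R hq hqR
        by_cases hpQ : p ∈ Q
        · rw [Bf, Bf, if_neg hXp, if_neg hXq, if_pos hpR, if_neg hqR]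
          by_contra h
          exact hXp (Swap.seed2 hpQ hpR hqQ hqR hc h)
        · rcases (of_mem_vee_not_Q hp hpQ).2 with h1 | h1
          · exact absurd h1 (not_simSet_below hqQ hpQ hpq)
          · exact absurd h1 (not_gtSet_below hQ hqQ hpq)
    · obtain ⟨hpQ, hg⟩ := of_mem_vee_not_R hp hpR
      by_cases hqR : q ∈ R
      · exact absurd hg (not_gtSet_below' hR hqR hpR hpq)
      · rw [Bf, Bf, if_neg hXp, if_neg hXq, if_neg hpR, if_neg hqR]
        exact hw p q hpQ (of_mem_vee_not_R hq hqR).1 hc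

end Main

section Recover

variable {O : P → P → ℕ+ → WithTop ℤ} {Q R : Set P} {w s w' s' : P → ℕ+}

lemma swap_congr (hsa : ∀ p ∈ wedgeSet Q R, s p = s' p)
    (hwa : ∀ p ∈ veeSet Q R, w p = w' p) {p : P}
    (h : Swap O Q R w s p) : Swap O Q R w' s' p := by
  induction h with
  | seed1 haR haQ htQ htR hc h =>
    refine Swap.seed1 haR haQ htQ htR hc ?_
    rwa [← hsa _ (mem_wedge_of_lt haR haQ htQ hc.lt),
      ← hwa _ (mem_vee_inter htQ htR)]
  | seed2 huQ huR htQ htR hc h =>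
    refine Swap.seed2 huQ huR htQ htR hc ?_
    rwa [← hsa _ (mem_wedge_inter huQ huR),
      ← hwa _ (mem_vee_of_gt htQ htR huR hc.lt)]
  | up hu htQ htR hc h ih =>
    refine Swap.up ih htQ htR hc ?_
    rwa [← hsa _ (mem_wedge_inter hu.memQR.1 hu.memQR.2),
      ← hwa _ (mem_vee_inter htQ htR)]
  | down ht huQ huR hc h ih =>
    refine Swap.down ih huQ huR hc ?_
    rwa [← hsa _ (mem_wedge_inter huQ huR),
      ← hwa _ (mem_vee_inter ht.memQR.1 ht.memQR.2)]

lemma swap_iff_Y (hw : Tab O w Q) (hs : Tab O s R) {p : P} :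
    Swap O Q R w s p ↔ Swap O Q R (Bf O Q R w s) (Af O Q R w s) p := by
  constructor
  · intro h
    induction h with
    | seed1 haR haQ htQ htR hc h =>
      have hXt : Swap O Q R w s _ := Swap.seed1 haR haQ htQ htR hc h
      refine Swap.seed1 haR haQ htQ htR hc ?_
      have hXa : ¬ Swap O Q R w s _ := fun hx => haQ hx.memQR.1
      rw [Af, Bf, if_neg hXa, if_neg haQ, if_pos hXt]
      exact h
    | seed2 huQ huR htQ htR hc h =>
      have hXu : Swap O Q R w s _ := Swap.seed2 huQ huR htQ htR hc h
      refine Swap.seed2 huQ huR htQ htR hc ?_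
      have hXt : ¬ Swap O Q R w s _ := fun hx => htR hx.memQR.2
      rw [Af, Bf, if_pos hXu, if_neg hXt, if_neg htR]
      exact h
    | up hu htQ htR hc h ih =>
      have hXt : Swap O Q R w s _ := Swap.up hu htQ htR hc h
      refine Swap.up ih htQ htR hc ?_
      rw [Af, Bf, if_pos hu, if_pos hXt]
      exact h
    | down ht huQ huR hc h ih =>
      have hXu : Swap O Q R w s _ := Swap.down ht huQ huR hc h
      refine Swap.down ih huQ huR hc ?_
      rw [Af, Bf, if_pos hXu, if_pos ht]
      exact h
  · intro h
    induction h with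
    | seed1 haR haQ htQ htR hc h =>
      by_contra hXt
      have hXa : ¬ Swap O Q R w s _ := fun hx => haQ hx.memQR.1
      rw [Af, Bf, if_neg hXa, if_neg haQ, if_neg hXt, if_pos htR] at h
      exact h (hs _ _ haR htR hc)
    | seed2 huQ huR htQ htR hc h =>
      by_contra hXu
      have hXt : ¬ Swap O Q R w s _ := fun hx => htR hx.memQR.2
      rw [Af, Bf, if_neg hXu, if_pos huQ, if_neg hXt, if_neg htR] at h
      exact h (hw _ _ huQ htQ hc)
    | up hu htQ htR hc h ih =>
      by_contra hXt
      rw [Af, Bf, if_pos ih, if_neg hXt, if_pos htR] at h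
      exact h (hs _ _ ih.memQR.2 htR hc)
    | down ht huQ huR hc h ih =>
      by_contra hXu
      rw [Af, Bf, if_neg hXu, if_pos huQ, if_pos ih] at h
      exact h (hw _ _ huQ ih.memQR.1 hc)

end Recover

section PtEquiv

variable (O : P → P → ℕ+ → WithTop ℤ) (Q R : Set P) (w s : P → ℕ+)
variable (hQ : IsConvex Q) (hR : IsConvex R)

/-- the value-preserving point bijection `(Q ∧ R) ⊕ (Q ∨ R) ≃ Q ⊕ R`. -/
noncomputable def ptEquiv (hQ : IsConvex Q) (hR : IsConvex R) :
    (wedgeSet Q R) ⊕ (veeSet Q R) ≃ Q ⊕ R where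
  toFun x :=
    match x with
    | .inl ⟨p, hp⟩ =>
      if h : Swap O Q R w s p then .inr ⟨p, h.memQR.2⟩
      else if hq : p ∈ Q then .inl ⟨p, hq⟩
      else .inr ⟨p, (of_mem_wedge_not_Q hp hq).1⟩
    | .inr ⟨p, hp⟩ =>
      if h : Swap O Q R w s p then .inl ⟨p, h.memQR.1⟩
      else if hr : p ∈ R then .inr ⟨p, hr⟩
      else .inl ⟨p, (of_mem_vee_not_R hp hr).1⟩
  invFun x :=
    match x with
    | .inl ⟨p, hp⟩ =>
      if h : Swap O Q R w s p then .inr ⟨p, mem_vee_inter h.memQR.1 h.memQR.2⟩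
      else if hr : p ∈ R then .inl ⟨p, mem_wedge_inter hp hr⟩
      else if hg : gtSet p R then .inr ⟨p, Or.inl ⟨hp, hg⟩⟩
      else .inl ⟨p, Or.inr ⟨hp, sim_or_lt_of_not_gt hr hg⟩⟩
    | .inr ⟨p, hp⟩ =>
      if h : Swap O Q R w s p then .inl ⟨p, mem_wedge_inter h.memQR.1 h.memQR.2⟩
      else if hq : p ∈ Q then .inr ⟨p, mem_vee_inter hq hp⟩
      else if hl : ltSet p Q then .inl ⟨p, Or.inl ⟨hp, hl⟩⟩
      else .inr ⟨p, Or.inr ⟨hp, sim_or_gt_of_not_lt hq hl⟩⟩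
  left_inv := by
    rintro (⟨p, hp⟩ | ⟨p, hp⟩)
    · by_cases h : Swap O Q R w s p
      · simp only [dif_pos h]
      · by_cases hq : p ∈ Q
        · by_cases hr : p ∈ R
          · simp only [dif_neg h, dif_pos hq, dif_pos hr]
          · have hg : ¬ gtSet p R := by
              rcases (of_mem_wedge_not_R hp hr).2 with h1 | h1
              · exact sim_gt_exclusive hr h1
              · exact fun hg => lt_gt_exclusive hR ⟨h1, hg⟩
            simp only [dif_neg h, dif_pos hq, dif_neg hr, dif_neg hg]
        · simp only [dif_neg h, dif_neg hq, dif_pos (of_mem_wedge_not_Q hp hq).2]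
    · by_cases h : Swap O Q R w s p
      · simp only [dif_pos h]
      · by_cases hr : p ∈ R
        · by_cases hq : p ∈ Q
          · simp only [dif_neg h, dif_pos hr, dif_pos hq]
          · have hl : ¬ ltSet p Q := by
              rcases (of_mem_vee_not_Q hp hq).2 with h1 | h1
              · exact sim_lt_exclusive hq h1
              · exact fun hl => lt_gt_exclusive hQ ⟨hl, h1⟩
            simp only [dif_neg h, dif_pos hr, dif_neg hq, dif_neg hl]
        · simp only [dif_neg h, dif_neg hr, dif_pos (of_mem_vee_not_R hp hr).2]
  right_inv := by
    rintro (⟨p, hp⟩ | ⟨p, hp⟩)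
    · by_cases h : Swap O Q R w s p
      · simp only [dif_pos h]
      · by_cases hr : p ∈ R
        · simp only [dif_neg h, dif_pos hr, dif_pos hp]
        · by_cases hg : gtSet p R
          · simp only [dif_neg h, dif_neg hr, dif_pos hg]
          · simp only [dif_neg h, dif_neg hr, dif_neg hg, dif_pos hp]
    · by_cases h : Swap O Q R w s p
      · simp only [dif_pos h]
      · by_cases hq : p ∈ Q
        · simp only [dif_neg h, dif_pos hq, dif_pos hp]
        · by_cases hl : ltSet p Q
          · simp only [dif_neg h, dif_neg hq, dif_pos hl]
          · simp only [dif_neg h, dif_neg hq, dif_neg hl, dif_pos hp]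

lemma ptEquiv_val (x : (wedgeSet Q R) ⊕ (veeSet Q R)) :
    Sum.elim (fun z : Q => w z) (fun z : R => s z) (ptEquiv O Q R w s hQ hR x) =
      Sum.elim (fun z : wedgeSet Q R => Af O Q R w s z)
        (fun z : veeSet Q R => Bf O Q R w s z) x := by
  rcases x with ⟨p, hp⟩ | ⟨p, hp⟩
  · by_cases h : Swap O Q R w s p
    · simp only [ptEquiv, Equiv.coe_fn_mk, dif_pos h, Sum.elim_inr, Sum.elim_inl, Af, if_pos h]
    · by_cases hq : p ∈ Q
      · simp only [ptEquiv, Equiv.coe_fn_mk, dif_neg h, dif_pos hq, Sum.elim_inl, Af,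
          if_neg h, if_pos hq]
      · simp only [ptEquiv, Equiv.coe_fn_mk, dif_neg h, dif_neg hq, Sum.elim_inr, Sum.elim_inl,
          Af, if_neg h, if_neg hq]
  · by_cases h : Swap O Q R w s p
    · simp only [ptEquiv, Equiv.coe_fn_mk, dif_pos h, Sum.elim_inr, Sum.elim_inl, Bf, if_pos h]
    · by_cases hr : p ∈ R
      · simp only [ptEquiv, Equiv.coe_fn_mk, dif_neg h, dif_pos hr, Sum.elim_inr, Bf,
          if_neg h, if_pos hr]
      · simp only [ptEquiv, Equiv.coe_fn_mk, dif_neg h, dif_neg hr, Sum.elim_inl, Sum.elim_inr,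
          Bf, if_neg h, if_neg hr]

end PtEquiv

section Count

variable {O : P → P → ℕ+ → WithTop ℤ} {Q R : Set P} {w s : P → ℕ+}

lemma weight_eq (hQf : Q.Finite) (hRf : R.Finite) (hQ : IsConvex Q) (hR : IsConvex R)
    (n : ℕ+) :
    Nat.card {x : wedgeSet Q R // Af O Q R w s x = n} +
      Nat.card {x : veeSet Q R // Bf O Q R w s x = n} =
        Nat.card {x : Q // w x = n} + Nat.card {x : R // s x = n} := by
  haveI := ((hQf.union hRf).subset wedge_subset).to_subtype
  haveI := ((hQf.union hRf).subset vee_subset).to_subtype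
  haveI := hQf.to_subtype
  haveI := hRf.to_subtype
  rw [← Nat.card_sum, ← Nat.card_sum]
  apply Nat.card_congr
  refine (((Equiv.subtypeSum (p := fun y : (wedgeSet Q R) ⊕ (veeSet Q R) =>
      Sum.elim (fun z : wedgeSet Q R => Af O Q R w s z)
        (fun z : veeSet Q R => Bf O Q R w s z) y = n)).symm.trans ?_).trans
    (Equiv.subtypeSum (p := fun y : Q ⊕ R =>
      Sum.elim (fun z : Q => w z) (fun z : R => s z) y = n)))
  exact Equiv.subtypeEquiv (ptEquiv O Q R w s hQ hR)
    (fun y => by rw [ptEquiv_val O Q R w s hQ hR y])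

lemma finite_aux {A B : Type*} [Finite A] [Finite B] {d : ℕ+ → ℕ}
    (hd : (Function.support d).Finite) (K : (A → ℕ+) × (B → ℕ+) → Prop)
    (hK : ∀ p, K p → ∀ n : ℕ+, _root_.wtFun p.1 n + _root_.wtFun p.2 n = d n) :
    Finite {p : (A → ℕ+) × (B → ℕ+) // K p} := by
  haveI := (hd.insert 1).to_subtype
  have mem1 : ∀ (p : (A → ℕ+) × (B → ℕ+)), K p → ∀ a : A,
      p.1 a ∈ insert 1 (Function.support d) := by
    intro p hp a
    haveI : Nonempty {y : A // p.1 y = p.1 a} := ⟨⟨a, rfl⟩⟩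
    have h1 : 0 < Nat.card {y : A // p.1 y = p.1 a} :=
      Nat.card_pos (α := {y : A // p.1 y = p.1 a})
    have := hK p hp (p.1 a)
    simp only [_root_.wtFun] at this
    refine Set.mem_insert_of_mem _ ?_
    simp only [Function.mem_support]
    omega
  have mem2 : ∀ (p : (A → ℕ+) × (B → ℕ+)), K p → ∀ b : B,
      p.2 b ∈ insert 1 (Function.support d) := by
    intro p hp b
    haveI : Nonempty {y : B // p.2 y = p.2 b} := ⟨⟨b, rfl⟩⟩
    have h1 : 0 < Nat.card {y : B // p.2 y = p.2 b} :=
      Nat.card_pos (α := {y : B // p.2 y = p.2 b})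
    have := hK p hp (p.2 b)
    simp only [_root_.wtFun] at this
    refine Set.mem_insert_of_mem _ ?_
    simp only [Function.mem_support]
    omega
  refine Finite.of_injective (β := (A → (insert 1 (Function.support d) : Set ℕ+)) ×
    (B → (insert 1 (Function.support d) : Set ℕ+)))
    (fun x => (fun a => ⟨x.1.1 a, mem1 x.1 x.2 a⟩, fun b => ⟨x.1.2 b, mem2 x.1 x.2 b⟩)) ?_
  intro x y h
  obtain ⟨h1, h2⟩ := Prod.mk.injEq .. ▸ h
  apply Subtype.ext
  apply Prod.ext
  · funext a
    exact congrArg Subtype.val (congrFun h1 a)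
  · funext b
    exact congrArg Subtype.val (congrFun h2 b)

end Count

section Transfer

variable (O : P → P → ℕ+ → WithTop ℤ) (Q R : Set P)

/-- extension of a tableau on `Q` to a total function. -/
noncomputable def extS (S : Set P) (f : S → ℕ+) : P → ℕ+ :=
  fun p => if h : p ∈ S then f ⟨p, h⟩ else 1

lemma extS_tab {S : Set P} (f : S → ℕ+) (hf : IsTableauOn O S f) :
    Tab O (extS S f) S := by
  intro p q hp hq hc
  have := hf ⟨p, hp⟩ ⟨q, hq⟩ hc
  simpa only [extS, dif_pos hp, dif_pos hq] using this

lemma extS_val {S : Set P} (f : S → ℕ+) (x : S) : extS S f x = f x := dif_pos x.2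

/-- the cell transfer map. -/
noncomputable def transfer (x : (Q → ℕ+) × (R → ℕ+)) :
    (wedgeSet Q R → ℕ+) × (veeSet Q R → ℕ+) :=
  (fun y => Af O Q R (extS Q x.1) (extS R x.2) y,
   fun y => Bf O Q R (extS Q x.1) (extS R x.2) y)

variable {O Q R}

lemma transfer_inj
    {f₁ : Q → ℕ+} {g₁ : R → ℕ+} {f₂ : Q → ℕ+} {g₂ : R → ℕ+}
    (hf₁ : IsTableauOn O Q f₁) (hg₁ : IsTableauOn O R g₁)
    (hf₂ : IsTableauOn O Q f₂) (hg₂ : IsTableauOn O R g₂)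
    (h : transfer O Q R (f₁, g₁) = transfer O Q R (f₂, g₂)) : (f₁, g₁) = (f₂, g₂) := by
  set w₁ := extS Q f₁ with hw₁def
  set s₁ := extS R g₁ with hs₁def
  set w₂ := extS Q f₂ with hw₂def
  set s₂ := extS R g₂ with hs₂def
  have hw₁ : Tab O w₁ Q := extS_tab O f₁ hf₁
  have hs₁ : Tab O s₁ R := extS_tab O g₁ hg₁
  have hw₂ : Tab O w₂ Q := extS_tab O f₂ hf₂
  have hs₂ : Tab O s₂ R := extS_tab O g₂ hg₂
  have hA : ∀ p, (hp : p ∈ wedgeSet Q R) → Af O Q R w₁ s₁ p = Af O Q R w₂ s₂ p := by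
    intro p hp
    exact congrFun (congrArg Prod.fst h) ⟨p, hp⟩
  have hB : ∀ p, (hp : p ∈ veeSet Q R) → Bf O Q R w₁ s₁ p = Bf O Q R w₂ s₂ p := by
    intro p hp
    exact congrFun (congrArg Prod.snd h) ⟨p, hp⟩
  have hX : ∀ p, Swap O Q R w₁ s₁ p ↔ Swap O Q R w₂ s₂ p := by
    intro p
    rw [swap_iff_Y hw₁ hs₁, swap_iff_Y hw₂ hs₂]
    constructor
    · exact swap_congr hA hB
    · exact swap_congr (fun p hp => (hA p hp).symm) (fun p hp => (hB p hp).symm)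
  have hwQ : ∀ p, p ∈ Q → w₁ p = w₂ p := by
    intro p hp
    by_cases hX1 : Swap O Q R w₁ s₁ p
    · have hX2 := (hX p).mp hX1
      have := hB p (mem_vee_inter hX1.memQR.1 hX1.memQR.2)
      rwa [Bf, Bf, if_pos hX1, if_pos hX2] at this
    · have hX2 : ¬ Swap O Q R w₂ s₂ p := fun h' => hX1 ((hX p).mpr h')
      by_cases hpR : p ∈ R
      · have := hA p (mem_wedge_inter hp hpR)
        rwa [Af, Af, if_neg hX1, if_neg hX2, if_pos hp, if_pos hp] at this
      · by_cases hg : gtSet p R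
        · have := hB p (Or.inl ⟨hp, hg⟩)
          rwa [Bf, Bf, if_neg hX1, if_neg hX2, if_neg hpR, if_neg hpR] at this
        · have := hA p (Or.inr ⟨hp, sim_or_lt_of_not_gt hpR hg⟩)
          rwa [Af, Af, if_neg hX1, if_neg hX2, if_pos hp, if_pos hp] at this
  have hsR : ∀ p, p ∈ R → s₁ p = s₂ p := by
    intro p hp
    by_cases hX1 : Swap O Q R w₁ s₁ p
    · have hX2 := (hX p).mp hX1
      have := hA p (mem_wedge_inter hX1.memQR.1 hX1.memQR.2)
      rwa [Af, Af, if_pos hX1, if_pos hX2] at this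
    · have hX2 : ¬ Swap O Q R w₂ s₂ p := fun h' => hX1 ((hX p).mpr h')
      by_cases hpQ : p ∈ Q
      · have := hB p (mem_vee_inter hpQ hp)
        rwa [Bf, Bf, if_neg hX1, if_neg hX2, if_pos hp, if_pos hp] at this
      · by_cases hl : ltSet p Q
        · have := hA p (Or.inl ⟨hp, hl⟩)
          rwa [Af, Af, if_neg hX1, if_neg hX2, if_neg hpQ, if_neg hpQ] at this
        · have := hB p (Or.inr ⟨hp, sim_or_gt_of_not_lt hpQ hl⟩)
          rwa [Bf, Bf, if_neg hX1, if_neg hX2, if_pos hp, if_pos hp] at this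
  have hf : f₁ = f₂ := by
    funext x
    have h1 := hwQ x x.2
    rwa [hw₁def, hw₂def, extS_val, extS_val] at h1
  have hg : g₁ = g₂ := by
    funext x
    have h1 := hsR x x.2
    rwa [hs₁def, hs₂def, extS_val, extS_val] at h1
  rw [hf, hg]

end Transfer

end CT

/-- Cell Transfer Theorem: for every finitely supported weight `d`,
there are at least as many pairs of tableaux of shapes `(Q ∧ R, Q ∨ R)` with total
weight `d` as pairs of shapes `(Q, R)`; i.e.
`K_{Q∧R,O} K_{Q∨R,O} − K_{Q,O} K_{R,O}` is monomial-positive. -/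
theorem cellTransfer (O : P → P → ℕ+ → WithTop ℤ)
    (hO : ∀ s t : P, s ⋖ t → Monotone (O s t))
    (Q R : Set P) (hQf : Q.Finite) (hRf : R.Finite)
    (hQ : IsConvex Q) (hR : IsConvex R)
    (d : ℕ+ → ℕ) (hd : (Function.support d).Finite) :
    Nat.card {p : (Q → ℕ+) × (R → ℕ+) //
        IsTableauOn O Q p.1 ∧ IsTableauOn O R p.2 ∧
          ∀ n : ℕ+, wtFun p.1 n + wtFun p.2 n = d n} ≤
      Nat.card {p : (wedgeSet Q R → ℕ+) × (veeSet Q R → ℕ+) //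
        IsTableauOn O (wedgeSet Q R) p.1 ∧ IsTableauOn O (veeSet Q R) p.2 ∧
          ∀ n : ℕ+, wtFun p.1 n + wtFun p.2 n = d n} := by
  classical
  haveI : Finite (wedgeSet Q R) := ((hQf.union hRf).subset CT.wedge_subset).to_subtype
  haveI : Finite (veeSet Q R) := ((hQf.union hRf).subset CT.vee_subset).to_subtype
  haveI := hQf.to_subtype
  haveI := hRf.to_subtype
  have key : ∀ (f : Q → ℕ+) (g : R → ℕ+), IsTableauOn O Q f → IsTableauOn O R g →
      (∀ n : ℕ+, wtFun f n + wtFun g n = d n) →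
      IsTableauOn O (wedgeSet Q R) (CT.transfer O Q R (f, g)).1 ∧
      IsTableauOn O (veeSet Q R) (CT.transfer O Q R (f, g)).2 ∧
      ∀ n : ℕ+, wtFun (CT.transfer O Q R (f, g)).1 n +
        wtFun (CT.transfer O Q R (f, g)).2 n = d n := by
    intro f g hf hg hwt
    have hw : CT.Tab O (CT.extS Q f) Q := CT.extS_tab O f hf
    have hs : CT.Tab O (CT.extS R g) R := CT.extS_tab O g hg
    refine ⟨?_, ?_, ?_⟩
    · intro a b hc
      exact CT.Af_tab hO hQ hR hw hs a b a.2 b.2 hc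
    · intro a b hc
      exact CT.Bf_tab hO hQ hR hw hs a b a.2 b.2 hc
    · intro n
      have h1 := CT.weight_eq (O := O) (w := CT.extS Q f) (s := CT.extS R g) hQf hRf hQ hR n
      have h2 : Nat.card {x : Q // CT.extS Q f x = n} = wtFun f n :=
        Nat.card_congr (Equiv.subtypeEquivRight (fun x => by rw [CT.extS_val]))
      have h3 : Nat.card {x : R // CT.extS R g x = n} = wtFun g n :=
        Nat.card_congr (Equiv.subtypeEquivRight (fun x => by rw [CT.extS_val]))
      have h4 : wtFun (CT.transfer O Q R (f, g)).1 n =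
          Nat.card {x : wedgeSet Q R // CT.Af O Q R (CT.extS Q f) (CT.extS R g) x = n} := rfl
      have h5 : wtFun (CT.transfer O Q R (f, g)).2 n =
          Nat.card {x : veeSet Q R // CT.Bf O Q R (CT.extS Q f) (CT.extS R g) x = n} := rfl
      rw [h4, h5, h1, h2, h3]
      exact hwt n
  haveI : Finite {p : (wedgeSet Q R → ℕ+) × (veeSet Q R → ℕ+) //
      IsTableauOn O (wedgeSet Q R) p.1 ∧ IsTableauOn O (veeSet Q R) p.2 ∧
        ∀ n : ℕ+, wtFun p.1 n + wtFun p.2 n = d n} :=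
    CT.finite_aux hd _ (fun p hp => hp.2.2)
  apply Nat.card_le_card_of_injective
    (f := fun x => ⟨CT.transfer O Q R x.1,
      (key x.1.1 x.1.2 x.2.1 x.2.2.1 x.2.2.2).1,
      (key x.1.1 x.1.2 x.2.1 x.2.2.1 x.2.2.2).2.1,
      (key x.1.1 x.1.2 x.2.1 x.2.2.1 x.2.2.2).2.2⟩)
  intro x y hxy
  have h' : CT.transfer O Q R (x.1.1, x.1.2) = CT.transfer O Q R (y.1.1, y.1.2) :=
    congrArg Subtype.val hxy
  have h'' := CT.transfer_inj x.2.1 x.2.2.1 y.2.1 y.2.2.1 h'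
  exact Subtype.ext h''
end

section
/- Let P be a partially ordered set with a least element, and let I and J be nonempty finite order ideals of P. Then, regarding I and J as convex subsets of P, I ∧ J = I ∩ J and I ∨ J = I ∪ J; that is, the operations ∧ and ∨ on convex subsets agree with the meet and join of I and J in the lattice of finite order ideals of P. -/
variable {P : Type*} [PartialOrder P]

/-- An order ideal of `P`. -/
def IsOrderIdeal (I : Set P) : Prop := ∀ ⦃s t : P⦄, s ∈ I → t ≤ s → t ∈ I

/-- for nonempty finite order ideals `I`, `J` of a poset with a least
element, the convex-subset operations `∧`, `∨` agree with meet (intersection) and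
join (union) in the lattice `J(P)` of finite order ideals. -/
theorem wedge_vee_of_orderIdeals [OrderBot P] (I J : Set P)
    (hI : IsOrderIdeal I) (hJ : IsOrderIdeal J)
    (hIne : I.Nonempty) (hJne : J.Nonempty)
    (hIf : I.Finite) (hJf : J.Finite) :
    wedgeSet I J = I ∩ J ∧ veeSet I J = I ∪ J := by
  obtain ⟨a, haI⟩ := hIne
  obtain ⟨b, hbJ⟩ := hJne
  have hbotI : (⊥ : P) ∈ I := hI haI bot_le
  have hbotJ : (⊥ : P) ∈ J := hJ hbJ bot_le
  constructor
  · ext s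
    constructor
    · rintro (⟨hsJ, hsnI, t, htI, hst⟩ | ⟨hsI, h⟩)
      · exact absurd (hI htI hst.le) hsnI
      · refine ⟨hsI, ?_⟩
        rcases h with (hsJ | hinc) | ⟨hsnJ, t, htJ, hst⟩
        · exact hsJ
        · exact ((hinc ⊥ hbotJ).2 bot_le).elim
        · exact hJ htJ hst.le
    · rintro ⟨hsI, hsJ⟩
      exact Or.inr ⟨hsI, Or.inl (Or.inl hsJ)⟩
  · ext s
    constructor
    · rintro (⟨hsI, _⟩ | ⟨hsJ, _⟩)
      · exact Or.inl hsI
      · exact Or.inr hsJ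
    · rintro (hsI | hsJ)
      · by_cases hsJ : s ∈ J
        · exact Or.inr ⟨hsJ, Or.inl (Or.inl hsI)⟩
        · refine Or.inl ⟨hsI, hsJ, ⊥, hbotJ, ?_⟩
          exact lt_of_le_of_ne bot_le (fun h => hsJ (h ▸ hbotJ))
      · by_cases hsI : s ∈ I
        · exact Or.inr ⟨hsJ, Or.inl (Or.inl hsI)⟩
        · refine Or.inr ⟨hsJ, Or.inr ⟨hsI, ⊥, hbotI, ?_⟩⟩
          exact lt_of_le_of_ne bot_le (fun h => hsI (h ▸ hbotI))
end

section
/- Let P be a locally finite partially ordered set with a T-labelling O, and let I and J be finite order ideals of P. Then for every finitely supported function d : ℙ → ℕ, the number of pairs (α,β) with α ∈ A(I ∩ J, O), β ∈ A(I ∪ J, O) and wt(α) + wt(β) = d is greater than or equal to the number of pairs (ω,σ) with ω ∈ A(I,O), σ ∈ A(J,O) and wt(ω) + wt(σ) = d. Equivalently, K_{I∧J, O} K_{I∨J, O} − K_{I,O} K_{J,O} is monomial-positive, where ∧ and ∨ denote meet (intersection) and join (union) in the lattice J(P) of finite order ideals of P. -/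
variable {P : Type*} [PartialOrder P]

namespace CellT

lemma toWT_le {a b : ℕ+} : toWT a ≤ toWT b ↔ a ≤ b := by
  simp [toWT, ← PNat.coe_le_coe]

lemma toWT_lt {a b : ℕ+} : toWT a < toWT b ↔ a < b := by
  simp [toWT, ← PNat.coe_lt_coe]

open Classical in
/-- Extension of a function on a subset to all of `P`. -/
noncomputable def extFn (Q : Set P) (f : Q → ℕ+) : P → ℕ+ :=
  fun x => if h : x ∈ Q then f ⟨x, h⟩ else 1

lemma extFn_eq {Q : Set P} (f : Q → ℕ+) : (fun x : Q => extFn Q f ↑x) = f := by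
  funext x
  simp [extFn, x.2]

lemma extFn_tableau {O : P → P → ℕ+ → WithTop ℤ} {Q : Set P} {f : Q → ℕ+}
    (hf : IsTableauOn O Q f) :
    ∀ a b : P, a ∈ Q → b ∈ Q → a ⋖ b → toWT (extFn Q f a) ≤ O a b (extFn Q f b) := by
  intro a b ha hb hcov
  simpa [extFn, ha, hb] using hf ⟨a, ha⟩ ⟨b, hb⟩ hcov

section Defs

variable (O : P → P → ℕ+ → WithTop ℤ) (I J : Set P) (W Sg : P → ℕ+)

/-- Directed rigid edge. -/
def R1 (a b : P) : Prop :=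
  a ⋖ b ∧ (O a b (W b) < toWT (Sg a) ∨ O a b (Sg b) < toWT (W a))

/-- Undirected rigid edge inside `I ∩ J`. -/
def Rg (a b : P) : Prop :=
  a ∈ I ∩ J ∧ b ∈ I ∩ J ∧ (R1 O W Sg a b ∨ R1 O W Sg b a)

/-- Forced (boundary-violating) points. -/
def Fz (z : P) : Prop :=
  z ∈ I ∩ J ∧ ∃ u, u ∈ I \ J ∧ z ⋖ u ∧ O z u (W u) < toWT (Sg z)

/-- The swap set. -/
def Sw (x : P) : Prop :=
  ∃ z, Relation.ReflTransGen (Rg O I J W Sg) x z ∧ Fz O I J W Sg z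

open Classical in
/-- The first component of the transferred pair. -/
noncomputable def Af (x : P) : ℕ+ := if Sw O I J W Sg x then Sg x else W x

open Classical in
/-- The second component of the transferred pair. -/
noncomputable def Bf (x : P) : ℕ+ :=
  if Sw O I J W Sg x then W x else if x ∈ J then Sg x else W x

end Defs

section Lemmas

variable {O : P → P → ℕ+ → WithTop ℤ} {I J : Set P} {W Sg : P → ℕ+}

lemma Sw_of_rg {x y : P} (h : Rg O I J W Sg x y) (hy : Sw O I J W Sg y) :
    Sw O I J W Sg x :=
  let ⟨z, hp, hz⟩ := hy
  ⟨z, Relation.ReflTransGen.head h hp, hz⟩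

lemma Sw_mem {x : P} (h : Sw O I J W Sg x) : x ∈ I ∩ J := by
  obtain ⟨z, hp, hz⟩ := h
  rcases hp.cases_head with rfl | ⟨c, hrg, -⟩
  · exact hz.1
  · exact hrg.1

variable (hO : ∀ s t : P, s ⋖ t → Monotone (O s t))
variable (HW : ∀ a b : P, a ∈ I → b ∈ I → a ⋖ b → toWT (W a) ≤ O a b (W b))
variable (HS : ∀ a b : P, a ∈ J → b ∈ J → a ⋖ b → toWT (Sg a) ≤ O a b (Sg b))

include hO HW HS in
lemma Sw_sign {x : P} (hx : Sw O I J W Sg x) : W x < Sg x := by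
  obtain ⟨z, hpath, hz⟩ := hx
  induction hpath using Relation.ReflTransGen.head_induction_on with
  | refl =>
    obtain ⟨hzIJ, u, hu, hcov, hlt⟩ := hz
    exact toWT_lt.1 (lt_of_le_of_lt (HW z u hzIJ.1 hu.1 hcov) hlt)
  | head hrg _ ih =>
    rename_i a c _
    obtain ⟨haIJ, hcIJ, h | h⟩ := hrg
    · obtain ⟨hcov, hlt | hlt⟩ := h
      · exact toWT_lt.1 (lt_of_le_of_lt (HW a c haIJ.1 hcIJ.1 hcov) hlt)
      · have h1 : toWT (W a) ≤ O a c (Sg c) :=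
          le_trans (HW a c haIJ.1 hcIJ.1 hcov) (hO a c hcov ih.le)
        exact absurd (lt_of_le_of_lt h1 hlt) (lt_irrefl _)
    · obtain ⟨hcov, hlt | hlt⟩ := h
      · have h1 : O c a (W a) < O c a (Sg a) :=
          lt_of_lt_of_le hlt (HS c a hcIJ.2 haIJ.2 hcov)
        by_contra hcon
        exact absurd (hO c a hcov (not_lt.1 hcon)) (not_le.2 h1)
      · exact absurd (toWT_lt.1 (lt_of_le_of_lt (HS c a hcIJ.2 haIJ.2 hcov) hlt))
          (not_lt.2 ih.le)

include HW HS in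
lemma Af_tableau :
    IsTableauOn O (I ∩ J) (fun x : ↥(I ∩ J) => Af O I J W Sg ↑x) := by
  rintro ⟨s, hs⟩ ⟨t, ht⟩ hcov
  simp only [Af]
  by_cases hsS : Sw O I J W Sg s
  · by_cases htS : Sw O I J W Sg t
    · rw [if_pos hsS, if_pos htS]
      exact HS s t hs.2 ht.2 hcov
    · rw [if_pos hsS, if_neg htS]
      by_contra hcon
      exact htS (Sw_of_rg ⟨ht, hs, Or.inr ⟨hcov, Or.inl (not_le.1 hcon)⟩⟩ hsS)
  · by_cases htS : Sw O I J W Sg t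
    · rw [if_neg hsS, if_pos htS]
      by_contra hcon
      exact hsS (Sw_of_rg ⟨hs, ht, Or.inl ⟨hcov, Or.inr (not_le.1 hcon)⟩⟩ htS)
    · rw [if_neg hsS, if_neg htS]
      exact HW s t hs.1 ht.1 hcov

variable (hI : IsOrderIdeal I) (hJ : IsOrderIdeal J)

include hI hJ hO HW HS in
lemma Bf_tableau :
    IsTableauOn O (I ∪ J) (fun x : ↥(I ∪ J) => Bf O I J W Sg ↑x) := by
  rintro ⟨s, hs⟩ ⟨t, ht⟩ hcov
  simp only [Bf]
  by_cases hsS : Sw O I J W Sg s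
  · have hsIJ := Sw_mem hsS
    rw [if_pos hsS]
    by_cases htS : Sw O I J W Sg t
    · rw [if_pos htS]
      exact HW s t hsIJ.1 (Sw_mem htS).1 hcov
    · rw [if_neg htS]
      by_cases htJ : t ∈ J
      · rw [if_pos htJ]
        by_cases htI : t ∈ I
        · by_contra hcon
          exact htS (Sw_of_rg ⟨⟨htI, htJ⟩, hsIJ, Or.inr ⟨hcov, Or.inr (not_le.1 hcon)⟩⟩ hsS)
        · have h1 : W s < Sg s := Sw_sign hO HW HS hsS
          exact le_trans (toWT_le.2 h1.le) (HS s t hsIJ.2 htJ hcov)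
      · rw [if_neg htJ]
        exact HW s t hsIJ.1 (ht.resolve_right htJ) hcov
  · rw [if_neg hsS]
    by_cases hsJ : s ∈ J
    · rw [if_pos hsJ]
      by_cases htI : t ∈ I
      · have hsI : s ∈ I := hI htI hcov.le
        by_cases htJ : t ∈ J
        · by_cases htS : Sw O I J W Sg t
          · rw [if_pos htS]
            by_contra hcon
            exact hsS (Sw_of_rg ⟨⟨hsI, hsJ⟩, ⟨htI, htJ⟩, Or.inl ⟨hcov, Or.inl (not_le.1 hcon)⟩⟩ htS)
          · rw [if_neg htS, if_pos htJ]
            exact HS s t hsJ htJ hcov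
        · have htS : ¬ Sw O I J W Sg t := fun h => htJ (Sw_mem h).2
          rw [if_neg htS, if_neg htJ]
          by_contra hcon
          exact hsS ⟨s, Relation.ReflTransGen.refl,
            ⟨⟨hsI, hsJ⟩, t, ⟨htI, htJ⟩, hcov, not_le.1 hcon⟩⟩
      · have htJ : t ∈ J := ht.resolve_left htI
        have htS : ¬ Sw O I J W Sg t := fun h => htI (Sw_mem h).1
        rw [if_neg htS, if_pos htJ]
        exact HS s t hsJ htJ hcov
    · rw [if_neg hsJ]
      have hsI : s ∈ I := hs.resolve_right hsJ
      have htJ : t ∉ J := fun h => hsJ (hJ h hcov.le)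
      have htI : t ∈ I := ht.resolve_right htJ
      have htS : ¬ Sw O I J W Sg t := fun h => htJ (Sw_mem h).2
      rw [if_neg htS, if_neg htJ]
      exact HW s t hsI htI hcov

end Lemmas

section Transfer

variable {O : P → P → ℕ+ → WithTop ℤ} {I J : Set P} {W Sg W' Sg' : P → ℕ+}
variable (HW' : ∀ a b : P, a ∈ I → b ∈ I → a ⋖ b → toWT (W' a) ≤ O a b (W' b))
variable (HS' : ∀ a b : P, a ∈ J → b ∈ J → a ⋖ b → toWT (Sg' a) ≤ O a b (Sg' b))
variable (hpair : ∀ x, x ∈ I ∩ J →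
    (W' x = W x ∧ Sg' x = Sg x) ∨ (W' x = Sg x ∧ Sg' x = W x))
variable (hbd : ∀ x, x ∈ I → x ∉ J → W' x = W x)

include hbd hpair HW' in
lemma Fz_transfer {z : P} (h : Fz O I J W Sg z) : Fz O I J W' Sg' z := by
  obtain ⟨hzIJ, u, hu, hcov, hlt⟩ := h
  refine ⟨hzIJ, u, hu, hcov, ?_⟩
  rw [hbd u hu.1 hu.2]
  rcases hpair z hzIJ with ⟨h1, h2⟩ | ⟨h1, h2⟩
  · rw [h2]; exact hlt
  · exact absurd (HW' z u hzIJ.1 hu.1 hcov)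
      (not_le.2 (by rw [h1, hbd u hu.1 hu.2]; exact hlt))

include hpair HW' HS' in
lemma R1_transfer {a b : P} (ha : a ∈ I ∩ J) (hb : b ∈ I ∩ J)
    (h : R1 O W Sg a b) : R1 O W' Sg' a b := by
  obtain ⟨hcov, h | h⟩ := h
  · rcases hpair a ha with ⟨ha1, ha2⟩ | ⟨ha1, ha2⟩ <;>
      rcases hpair b hb with ⟨hb1, hb2⟩ | ⟨hb1, hb2⟩
    · exact ⟨hcov, Or.inl (by rw [hb1, ha2]; exact h)⟩
    · exact absurd (HS' a b ha.2 hb.2 hcov)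
        (not_le.2 (by rw [hb2, ha2]; exact h))
    · exact absurd (HW' a b ha.1 hb.1 hcov)
        (not_le.2 (by rw [hb1, ha1]; exact h))
    · exact ⟨hcov, Or.inr (by rw [hb2, ha1]; exact h)⟩
  · rcases hpair a ha with ⟨ha1, ha2⟩ | ⟨ha1, ha2⟩ <;>
      rcases hpair b hb with ⟨hb1, hb2⟩ | ⟨hb1, hb2⟩
    · exact ⟨hcov, Or.inr (by rw [hb2, ha1]; exact h)⟩
    · exact absurd (HW' a b ha.1 hb.1 hcov)
        (not_le.2 (by rw [hb1, ha1]; exact h))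
    · exact absurd (HS' a b ha.2 hb.2 hcov)
        (not_le.2 (by rw [hb2, ha2]; exact h))
    · exact ⟨hcov, Or.inl (by rw [hb1, ha2]; exact h)⟩

include hpair HW' HS' in
lemma Rg_transfer {a b : P} (h : Rg O I J W Sg a b) : Rg O I J W' Sg' a b :=
  ⟨h.1, h.2.1, h.2.2.elim
    (fun h' => Or.inl (R1_transfer HW' HS' hpair h.1 h.2.1 h'))
    (fun h' => Or.inr (R1_transfer HW' HS' hpair h.2.1 h.1 h'))⟩

include hpair hbd HW' HS' in
lemma Sw_transfer {x : P} (h : Sw O I J W Sg x) : Sw O I J W' Sg' x := by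
  obtain ⟨z, hp, hz⟩ := h
  exact ⟨z, Relation.ReflTransGen.mono (p := Rg O I J W' Sg') (fun a b hab => Rg_transfer HW' HS' hpair hab) _ _ hp,
    Fz_transfer HW' hpair hbd hz⟩

end Transfer

section Count

open Classical in
lemma wt_count {Q : Set P} (hQ : Q.Finite) (f : P → ℕ+) (n : ℕ+) :
    wtFun (fun x : Q => f ↑x) n = ∑ x ∈ hQ.toFinset, if f x = n then 1 else 0 := by
  classical
  have e : {x : Q // f ↑x = n} ≃ {x : P // x ∈ hQ.toFinset.filter fun x => f x = n} :=
    { toFun := fun a => ⟨a.1.1, by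
        simp only [Finset.mem_filter, Set.Finite.mem_toFinset]
        exact ⟨a.1.2, a.2⟩⟩
      invFun := fun a => ⟨⟨a.1, hQ.mem_toFinset.1 (Finset.mem_filter.1 a.2).1⟩,
        (Finset.mem_filter.1 a.2).2⟩
      left_inv := fun a => rfl
      right_inv := fun a => rfl }
  rw [wtFun, Nat.card_congr e, Nat.card_eq_fintype_card, Fintype.card_coe,
    Finset.card_filter]

open Classical in
lemma weight_eq {I J : Set P} (hIf : I.Finite) (hJf : J.Finite)
    (A B W Sg : P → ℕ+)
    (ha : ∀ x, x ∈ I → x ∈ J → (A x = Sg x ∧ B x = W x) ∨ (A x = W x ∧ B x = Sg x))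
    (hb1 : ∀ x, x ∈ I → x ∉ J → B x = W x)
    (hb2 : ∀ x, x ∈ J → x ∉ I → B x = Sg x) (n : ℕ+) :
    wtFun (fun x : ↥(I ∩ J) => A ↑x) n + wtFun (fun x : ↥(I ∪ J) => B ↑x) n
      = wtFun (fun x : ↥I => W ↑x) n + wtFun (fun x : ↥J => Sg ↑x) n := by
  classical
  have hIJf : (I ∩ J).Finite := hIf.inter_of_left J
  have hUf : (I ∪ J).Finite := hIf.union hJf
  have conv : ∀ (Q : Set P) (hQ : Q.Finite) (f : P → ℕ+), Q ⊆ I ∪ J →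
      (∑ x ∈ hQ.toFinset, if f x = n then 1 else 0)
        = ∑ x ∈ hUf.toFinset, if x ∈ Q ∧ f x = n then 1 else 0 := by
    intro Q hQ f hsub
    have hfs : hQ.toFinset = hUf.toFinset.filter (· ∈ Q) := by
      ext x
      simp only [Set.Finite.mem_toFinset, Finset.mem_filter]
      exact ⟨fun h => ⟨hsub h, h⟩, fun h => h.2⟩
    rw [hfs, Finset.sum_filter]
    refine Finset.sum_congr rfl fun x _ => ?_
    by_cases h : x ∈ Q <;> simp [h]
  rw [wt_count hIJf, wt_count hUf, wt_count hIf, wt_count hJf,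
    conv _ hIJf A (fun x hx => Or.inl hx.1), conv _ hUf B le_rfl,
    conv _ hIf W Set.subset_union_left, conv _ hJf Sg Set.subset_union_right,
    ← Finset.sum_add_distrib, ← Finset.sum_add_distrib]
  refine Finset.sum_congr rfl fun x hx => ?_
  have hxU : x ∈ I ∪ J := hUf.mem_toFinset.1 hx
  by_cases hxI : x ∈ I <;> by_cases hxJ : x ∈ J
  · rcases ha x hxI hxJ with ⟨h1, h2⟩ | ⟨h1, h2⟩ <;>
      simp only [Set.mem_inter_iff, Set.mem_union, hxI, hxJ, hxU, true_and, and_true,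
        h1, h2, or_self, true_or, if_true, if_false] <;>
      split_ifs <;> omega
  · simp only [Set.mem_inter_iff, Set.mem_union, hxI, hxJ, hxU, and_false, false_and,
      true_and, and_true, or_false, hb1 x hxI hxJ, if_true, if_false] <;>
      split_ifs <;> omega
  · simp only [Set.mem_inter_iff, Set.mem_union, hxI, hxJ, hxU, and_false, false_and,
      true_and, and_true, false_or, hb2 x hxJ hxI, if_true, if_false] <;>
      split_ifs <;> omega
  · exact absurd hxU (by simp [hxI, hxJ])

lemma wt_pos {α : Type*} [Finite α] (f : α → ℕ+) (a : α) : 0 < wtFun f (f a) := by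
  rw [wtFun]
  have : Nonempty {x : α // f x = f a} := ⟨⟨a, rfl⟩⟩
  exact Nat.card_pos

end Count

end CellT

/-- cell transfer for order ideals of a locally finite poset.  For
finite order ideals `I`, `J` and every finitely supported weight `d`, there are at
least as many pairs of tableaux of shapes `(I ∩ J, I ∪ J)` with total weight `d`
as pairs of shapes `(I, J)`; i.e. `K_{I∧J,O} K_{I∨J,O} − K_{I,O} K_{J,O}` is
monomial-positive, where `∧`, `∨` are meet and join in `J(P)`. -/
theorem cellTransfer_orderIdeals [LocallyFiniteOrder P]
    (O : P → P → ℕ+ → WithTop ℤ)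
    (hO : ∀ s t : P, s ⋖ t → Monotone (O s t))
    (I J : Set P) (hI : IsOrderIdeal I) (hJ : IsOrderIdeal J)
    (hIf : I.Finite) (hJf : J.Finite)
    (d : ℕ+ → ℕ) (hd : (Function.support d).Finite) :
    Nat.card {p : (I → ℕ+) × (J → ℕ+) //
        IsTableauOn O I p.1 ∧ IsTableauOn O J p.2 ∧
          ∀ n : ℕ+, wtFun p.1 n + wtFun p.2 n = d n} ≤
      Nat.card {p : ((I ∩ J : Set P) → ℕ+) × ((I ∪ J : Set P) → ℕ+) //
        IsTableauOn O (I ∩ J) p.1 ∧ IsTableauOn O (I ∪ J) p.2 ∧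
          ∀ n : ℕ+, wtFun p.1 n + wtFun p.2 n = d n} := by
  classical
  open CellT in
  have hIJf : (I ∩ J).Finite := hIf.inter_of_left J
  have hUf : (I ∪ J).Finite := hIf.union hJf
  haveI : Finite ↥(I ∩ J) := hIJf.to_subtype
  haveI : Finite ↥(I ∪ J) := hUf.to_subtype
  haveI : Finite ↥(Function.support d) := hd.to_subtype
  -- finiteness of the target
  haveI hfin : Finite {p : ((I ∩ J : Set P) → ℕ+) × ((I ∪ J : Set P) → ℕ+) //
      IsTableauOn O (I ∩ J) p.1 ∧ IsTableauOn O (I ∪ J) p.2 ∧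
        ∀ n : ℕ+, wtFun p.1 n + wtFun p.2 n = d n} := by
    have hmem1 : ∀ (p : {p : ((I ∩ J : Set P) → ℕ+) × ((I ∪ J : Set P) → ℕ+) //
        IsTableauOn O (I ∩ J) p.1 ∧ IsTableauOn O (I ∪ J) p.2 ∧
          ∀ n : ℕ+, wtFun p.1 n + wtFun p.2 n = d n}) (a : ↥(I ∩ J)),
        p.1.1 a ∈ Function.support d := by
      intro p a
      have h := p.2.2.2 (p.1.1 a)
      have h1 := CellT.wt_pos p.1.1 a
      exact Function.mem_support.2 (by omega)
    have hmem2 : ∀ (p : {p : ((I ∩ J : Set P) → ℕ+) × ((I ∪ J : Set P) → ℕ+) //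
        IsTableauOn O (I ∩ J) p.1 ∧ IsTableauOn O (I ∪ J) p.2 ∧
          ∀ n : ℕ+, wtFun p.1 n + wtFun p.2 n = d n}) (a : ↥(I ∪ J)),
        p.1.2 a ∈ Function.support d := by
      intro p a
      have h := p.2.2.2 (p.1.2 a)
      have h1 := CellT.wt_pos p.1.2 a
      exact Function.mem_support.2 (by omega)
    apply Finite.of_injective
      (β := (↥(I ∩ J) → ↥(Function.support d)) × (↥(I ∪ J) → ↥(Function.support d)))
      (fun p => (fun a => ⟨p.1.1 a, hmem1 p a⟩, fun a => ⟨p.1.2 a, hmem2 p a⟩))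
    intro p q h
    apply Subtype.ext
    have h1 := congrArg Prod.fst h
    have h2 := congrArg Prod.snd h
    refine Prod.ext ?_ ?_
    · funext a
      exact congrArg Subtype.val (congrFun h1 a)
    · funext a
      exact congrArg Subtype.val (congrFun h2 a)
  -- source type abbreviation
  set T1 := {p : (I → ℕ+) × (J → ℕ+) //
      IsTableauOn O I p.1 ∧ IsTableauOn O J p.2 ∧
        ∀ n : ℕ+, wtFun p.1 n + wtFun p.2 n = d n} with hT1
  -- properties of the image
  have key : ∀ p : T1,
      IsTableauOn O (I ∩ J)
        (fun x : ↥(I ∩ J) => Af O I J (extFn I p.1.1) (extFn J p.1.2) ↑x) ∧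
      IsTableauOn O (I ∪ J)
        (fun x : ↥(I ∪ J) => Bf O I J (extFn I p.1.1) (extFn J p.1.2) ↑x) ∧
      ∀ n : ℕ+,
        wtFun (fun x : ↥(I ∩ J) => Af O I J (extFn I p.1.1) (extFn J p.1.2) ↑x) n +
          wtFun (fun x : ↥(I ∪ J) => Bf O I J (extFn I p.1.1) (extFn J p.1.2) ↑x) n
          = d n := by
    intro p
    have HW := extFn_tableau p.2.1
    have HS := extFn_tableau p.2.2.1
    refine ⟨Af_tableau HW HS, Bf_tableau hO HW HS hI hJ, fun n => ?_⟩
    have hw := weight_eq hIf hJf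
      (Af O I J (extFn I p.1.1) (extFn J p.1.2))
      (Bf O I J (extFn I p.1.1) (extFn J p.1.2))
      (extFn I p.1.1) (extFn J p.1.2)
      (by
        intro x hx1 hx2
        by_cases hS : Sw O I J (extFn I p.1.1) (extFn J p.1.2) x
        · exact Or.inl ⟨by simp [Af, hS], by simp [Bf, hS]⟩
        · exact Or.inr ⟨by simp [Af, hS], by simp [Bf, hS, hx2]⟩)
      (by
        intro x hx1 hx2
        have hS : ¬ Sw O I J (extFn I p.1.1) (extFn J p.1.2) x :=
          fun h => hx2 (Sw_mem h).2
        simp [Bf, hS, hx2])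
      (by
        intro x hx1 hx2
        have hS : ¬ Sw O I J (extFn I p.1.1) (extFn J p.1.2) x :=
          fun h => hx2 (Sw_mem h).1
        simp [Bf, hS, hx1])
      n
    rw [hw, extFn_eq p.1.1, extFn_eq p.1.2]
    exact p.2.2.2 n
  -- the injection
  apply Nat.card_le_card_of_injective
    (fun p : T1 =>
      (⟨(fun x : ↥(I ∩ J) => Af O I J (extFn I p.1.1) (extFn J p.1.2) ↑x,
         fun x : ↥(I ∪ J) => Bf O I J (extFn I p.1.1) (extFn J p.1.2) ↑x),
        (key p).1, (key p).2.1, (key p).2.2⟩ :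
        {p : ((I ∩ J : Set P) → ℕ+) × ((I ∪ J : Set P) → ℕ+) //
          IsTableauOn O (I ∩ J) p.1 ∧ IsTableauOn O (I ∪ J) p.2 ∧
            ∀ n : ℕ+, wtFun p.1 n + wtFun p.2 n = d n}))
  intro p q h
  have hv := congrArg Subtype.val h
  have hA : ∀ x (hx : x ∈ I ∩ J),
      Af O I J (extFn I p.1.1) (extFn J p.1.2) x
        = Af O I J (extFn I q.1.1) (extFn J q.1.2) x :=
    fun x hx => congrFun (congrArg Prod.fst hv) ⟨x, hx⟩
  have hB : ∀ x (hx : x ∈ I ∪ J),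
      Bf O I J (extFn I p.1.1) (extFn J p.1.2) x
        = Bf O I J (extFn I q.1.1) (extFn J q.1.2) x :=
    fun x hx => congrFun (congrArg Prod.snd hv) ⟨x, hx⟩
  set Wp := extFn I p.1.1 with hWp
  set Sp := extFn J p.1.2 with hSp
  set Wq := extFn I q.1.1 with hWq
  set Sq := extFn J q.1.2 with hSq
  have HWp := extFn_tableau p.2.1
  have HSp := extFn_tableau p.2.2.1
  have HWq := extFn_tableau q.2.1
  have HSq := extFn_tableau q.2.2.1
  have hpair : ∀ x, x ∈ I ∩ J →
      (Wq x = Wp x ∧ Sq x = Sp x) ∨ (Wq x = Sp x ∧ Sq x = Wp x) := by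
    intro x hx
    have a := hA x hx
    have b := hB x (Or.inl hx.1)
    by_cases hp : Sw O I J Wp Sp x <;> by_cases hq : Sw O I J Wq Sq x
    · simp only [Af, Bf, if_pos hp, if_pos hq] at a b
      exact Or.inl ⟨b.symm, a.symm⟩
    · simp only [Af, Bf, if_pos hp, if_neg hq, if_pos hx.2] at a b
      exact Or.inr ⟨a.symm, b.symm⟩
    · simp only [Af, Bf, if_neg hp, if_pos hq, if_pos hx.2] at a b
      exact Or.inr ⟨b.symm, a.symm⟩
    · simp only [Af, Bf, if_neg hp, if_neg hq, if_pos hx.2] at a b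
      exact Or.inl ⟨a.symm, b.symm⟩
  have hpair' : ∀ x, x ∈ I ∩ J →
      (Wp x = Wq x ∧ Sp x = Sq x) ∨ (Wp x = Sq x ∧ Sp x = Wq x) := by
    intro x hx
    rcases hpair x hx with ⟨h1, h2⟩ | ⟨h1, h2⟩
    · exact Or.inl ⟨h1.symm, h2.symm⟩
    · exact Or.inr ⟨h2.symm, h1.symm⟩
  have hbd : ∀ x, x ∈ I → x ∉ J → Wq x = Wp x := by
    intro x hxI hxJ
    have b := hB x (Or.inl hxI)
    have hp : ¬ Sw O I J Wp Sp x := fun h => hxJ (Sw_mem h).2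
    have hq : ¬ Sw O I J Wq Sq x := fun h => hxJ (Sw_mem h).2
    simp only [Bf, if_neg hp, if_neg hq, if_neg hxJ] at b
    exact b.symm
  have hbd' : ∀ x, x ∈ I → x ∉ J → Wp x = Wq x := fun x h1 h2 => (hbd x h1 h2).symm
  have hSiff : ∀ x, Sw O I J Wp Sp x ↔ Sw O I J Wq Sq x := fun x =>
    ⟨fun hx => Sw_transfer HWq HSq hpair hbd hx,
     fun hx => Sw_transfer HWp HSp hpair' hbd' hx⟩
  apply Subtype.ext
  refine Prod.ext ?_ ?_
  · have hWW : ∀ x, x ∈ I → Wp x = Wq x := by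
      intro x hxI
      by_cases hxJ : x ∈ J
      · have hx : x ∈ I ∩ J := ⟨hxI, hxJ⟩
        by_cases hp : Sw O I J Wp Sp x
        · have hq := (hSiff x).1 hp
          have b := hB x (Or.inl hxI)
          simp only [Bf, if_pos hp, if_pos hq] at b
          exact b
        · have hq : ¬ Sw O I J Wq Sq x := fun h => hp ((hSiff x).2 h)
          have a := hA x hx
          simp only [Af, if_neg hp, if_neg hq] at a
          exact a
      · exact hbd' x hxI hxJ
    funext x
    have e1 : p.1.1 x = Wp ↑x := by
      rw [hWp]; simp [extFn, x.2]
    have e2 : q.1.1 x = Wq ↑x := by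
      rw [hWq]; simp [extFn, x.2]
    rw [e1, e2, hWW ↑x x.2]
  · have hSS : ∀ x, x ∈ J → Sp x = Sq x := by
      intro x hxJ
      by_cases hxI : x ∈ I
      · have hx : x ∈ I ∩ J := ⟨hxI, hxJ⟩
        by_cases hp : Sw O I J Wp Sp x
        · have hq := (hSiff x).1 hp
          have a := hA x hx
          simp only [Af, if_pos hp, if_pos hq] at a
          exact a
        · have hq : ¬ Sw O I J Wq Sq x := fun h => hp ((hSiff x).2 h)
          have b := hB x (Or.inl hxI)
          simp only [Bf, if_neg hp, if_neg hq, if_pos hxJ] at b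
          exact b
      · have hp : ¬ Sw O I J Wp Sp x := fun h => hxI (Sw_mem h).1
        have hq : ¬ Sw O I J Wq Sq x := fun h => hxI (Sw_mem h).1
        have b := hB x (Or.inr hxJ)
        simp only [Bf, if_neg hp, if_neg hq, if_pos hxJ] at b
        exact b
    funext x
    have e1 : p.1.2 x = Sp ↑x := by
      rw [hSp]; simp [extFn, x.2]
    have e2 : q.1.2 x = Sq ↑x := by
      rw [hSq]; simp [extFn, x.2]
    rw [e1, e2, hSS ↑x x.2]
end

section
/- Let λ, μ, ν, ρ be partitions with at most k parts satisfying μ ⊆ λ and ρ ⊆ ν, and let V denote the set of cells on which the shapes min(λ/μ, ν/ρ) and (λ/μ) ∧ (ν/ρ) differ (their symmetric difference). Then V ⊆ (λ/μ) ∪ (ν/ρ), each cell of V lies in exactly one of λ/μ and ν/ρ, and: if s ∈ V lies in λ/μ then s is incomparable (in the componentwise order on cells) with every cell of ν/ρ, while if s ∈ V lies in ν/ρ then s is incomparable with every cell of λ/μ. -/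
variable {P : Type*} [PartialOrder P]

/-- `λ` is a partition with at most `k` parts (weakly decreasing on indices `1,…,k`). -/
def IsPartitionK (k : ℕ) (lam : ℕ → ℕ) : Prop :=
  ∀ ⦃i j : ℕ⦄, 1 ≤ i → i ≤ j → j ≤ k → lam j ≤ lam i

/-- The cells `{(i,j) | 1 ≤ i ≤ k, μᵢ < j ≤ λᵢ}` of the skew shape `λ/μ`. -/
def skewCells (k : ℕ) (lam mu : ℕ → ℕ) : Set (ℕ × ℕ) :=
  {c | 1 ≤ c.1 ∧ c.1 ≤ k ∧ mu c.1 < c.2 ∧ c.2 ≤ lam c.1}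

/-- let `V` be the symmetric difference of `min(λ/μ, ν/ρ)` and
`(λ/μ) ∧ (ν/ρ)`.  Then `V ⊆ (λ/μ) ∪ (ν/ρ)`, each cell of `V` lies in exactly one
of `λ/μ`, `ν/ρ`, and a cell of `V` lying in one of the two shapes is incomparable
with every cell of the other shape. -/
theorem min_wedge_difference (k : ℕ) (lam mu nu rho : ℕ → ℕ)
    (hlam : IsPartitionK k lam) (hmu : IsPartitionK k mu)
    (hnu : IsPartitionK k nu) (hrho : IsPartitionK k rho)
    (hml : ∀ i, 1 ≤ i → i ≤ k → mu i ≤ lam i)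
    (hrn : ∀ i, 1 ≤ i → i ≤ k → rho i ≤ nu i) :
    ∀ V : Set (ℕ × ℕ),
      V = (skewCells k (fun i => min (lam i) (nu i)) (fun i => min (mu i) (rho i)) \
            wedgeSet (skewCells k lam mu) (skewCells k nu rho)) ∪
          (wedgeSet (skewCells k lam mu) (skewCells k nu rho) \
            skewCells k (fun i => min (lam i) (nu i)) (fun i => min (mu i) (rho i))) →
      V ⊆ skewCells k lam mu ∪ skewCells k nu rho ∧
        (∀ s ∈ V, Xor' (s ∈ skewCells k lam mu) (s ∈ skewCells k nu rho)) ∧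
        (∀ s ∈ V, s ∈ skewCells k lam mu →
          ∀ t ∈ skewCells k nu rho, ¬ s ≤ t ∧ ¬ t ≤ s) ∧
        (∀ s ∈ V, s ∈ skewCells k nu rho →
          ∀ t ∈ skewCells k lam mu, ¬ s ≤ t ∧ ¬ t ≤ s) := by
  intro V hV
  subst hV
  set A := skewCells k lam mu with hAdef
  set B := skewCells k nu rho with hBdef
  set M := skewCells k (fun i => min (lam i) (nu i)) (fun i => min (mu i) (rho i)) with hMdef
  set W := wedgeSet A B with hWdef
  -- membership characterizations
  have memA : ∀ s : ℕ × ℕ, s ∈ A ↔ 1 ≤ s.1 ∧ s.1 ≤ k ∧ mu s.1 < s.2 ∧ s.2 ≤ lam s.1 :=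
    fun s => Iff.rfl
  have memB : ∀ s : ℕ × ℕ, s ∈ B ↔ 1 ≤ s.1 ∧ s.1 ≤ k ∧ rho s.1 < s.2 ∧ s.2 ≤ nu s.1 :=
    fun s => Iff.rfl
  have memM : ∀ s : ℕ × ℕ, s ∈ M ↔ 1 ≤ s.1 ∧ s.1 ≤ k ∧
      min (mu s.1) (rho s.1) < s.2 ∧ s.2 ≤ min (lam s.1) (nu s.1) := fun s => Iff.rfl
  have memW : ∀ s : ℕ × ℕ, s ∈ W ↔ (s ∈ B ∧ ltSet s A) ∨ (s ∈ A ∧ (simSet s B ∨ ltSet s B)) :=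
    fun s => Iff.rfl
  -- if s is in both A and B, it is in both M and W
  have hboth : ∀ s : ℕ × ℕ, s ∈ A → s ∈ B → s ∈ M ∧ s ∈ W := by
    intro s hsA hsB
    obtain ⟨h1, hk1, hlt1, hle1⟩ := (memA s).mp hsA
    obtain ⟨_, _, hlt2, hle2⟩ := (memB s).mp hsB
    refine ⟨(memM s).mpr ⟨h1, hk1, lt_of_le_of_lt (min_le_left _ _) hlt1, le_min hle1 hle2⟩,
      (memW s).mpr (Or.inr ⟨hsA, Or.inl (Or.inl hsB)⟩)⟩
  -- if s is in neither A nor B, it is in neither M nor W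
  have hneither : ∀ s : ℕ × ℕ, s ∉ A → s ∉ B → s ∉ M ∧ s ∉ W := by
    intro s hsA hsB
    constructor
    · intro hsM
      obtain ⟨h1, hk1, hlt, hle⟩ := (memM s).mp hsM
      rcases min_lt_iff.mp hlt with h | h
      · exact hsA ((memA s).mpr ⟨h1, hk1, h, le_trans hle (min_le_left _ _)⟩)
      · exact hsB ((memB s).mpr ⟨h1, hk1, h, le_trans hle (min_le_right _ _)⟩)
    · intro hsW
      rcases (memW s).mp hsW with ⟨h, _⟩ | ⟨h, _⟩
      · exact hsB h
      · exact hsA h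
  -- key: if s ∈ V ∩ A and t ∈ B, then s and t are incomparable
  have keyA : ∀ s : ℕ × ℕ, s ∈ (M \ W) ∪ (W \ M) → s ∈ A → s ∉ B →
      ∀ t ∈ B, ¬ s ≤ t ∧ ¬ t ≤ s := by
    intro s hsV hsA hsB t htB
    obtain ⟨h1, hk1, hlt1, hle1⟩ := (memA s).mp hsA
    obtain ⟨t1, tk, tR, tν⟩ := (memB t).mp htB
    -- comparability implies s ∉ V
    have hcomp : (s ≤ t ∨ t ≤ s) → s ∉ (M \ W) ∪ (W \ M) := by
      intro hc
      rcases le_or_gt s.2 (nu s.1) with hN | hN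
      · -- s.2 ≤ nu s.1, hence s.2 ≤ rho s.1 (since s ∉ B), hence s ∈ M and s ∈ W
        have hR : s.2 ≤ rho s.1 := by
          by_contra h
          exact hsB ((memB s).mpr ⟨h1, hk1, lt_of_not_ge h, hN⟩)
        have hsM : s ∈ M := (memM s).mpr
          ⟨h1, hk1, lt_of_le_of_lt (min_le_left _ _) hlt1, le_min hle1 hN⟩
        -- t ≤ s is impossible
        have hts : ¬ t ≤ s := by
          intro h
          have h11 : t.1 ≤ s.1 := h.1
          have h22 : t.2 ≤ s.2 := h.2
          have : rho s.1 ≤ rho t.1 := hrho t1 h11 hk1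
          exact absurd (lt_of_lt_of_le tR (le_trans h22 (le_trans hR this))) (lt_irrefl _)
        have hst : s ≤ t := hc.resolve_right hts
        have hslt : s < t := lt_of_le_of_ne hst (by rintro rfl; exact hsB htB)
        have hsW : s ∈ W := (memW s).mpr (Or.inr ⟨hsA, Or.inr ⟨hsB, t, htB, hslt⟩⟩)
        rintro (⟨_, h⟩ | ⟨_, h⟩)
        · exact h hsW
        · exact h hsM
      · -- nu s.1 < s.2 : s ∉ M and s ∉ W
        have hsM : s ∉ M := by
          intro h
          obtain ⟨_, _, _, hle⟩ := (memM s).mp h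
          exact absurd (lt_of_lt_of_le hN (le_trans hle (min_le_right _ _))) (lt_irrefl _)
        have hsW : s ∉ W := by
          intro h
          rcases (memW s).mp h with ⟨h', _⟩ | ⟨_, hsim | hlt⟩
          · exact hsB h'
          · rcases hsim with h' | hinc
            · exact hsB h'
            · rcases hc with hc | hc
              · exact (hinc t htB).1 hc
              · exact (hinc t htB).2 hc
          · obtain ⟨_, u, huB, hsu⟩ := hlt
            obtain ⟨u1, uk, uR, uN⟩ := (memB u).mp huB
            have h11 : s.1 ≤ u.1 := (le_of_lt hsu).1
            have h22 : s.2 ≤ u.2 := (le_of_lt hsu).2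
            have : nu u.1 ≤ nu s.1 := hnu h1 h11 uk
            exact absurd (lt_of_le_of_lt (le_trans uN this) (lt_of_lt_of_le hN h22))
              (lt_irrefl _)
        rintro (⟨h, _⟩ | ⟨h, _⟩)
        · exact hsM h
        · exact hsW h
    exact ⟨fun h => hcomp (Or.inl h) hsV, fun h => hcomp (Or.inr h) hsV⟩
  -- key: if s ∈ V ∩ B and t ∈ A, then s and t are incomparable
  have keyB : ∀ s : ℕ × ℕ, s ∈ (M \ W) ∪ (W \ M) → s ∈ B → s ∉ A →
      ∀ t ∈ A, ¬ s ≤ t ∧ ¬ t ≤ s := by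
    intro s hsV hsB hsA t htA
    obtain ⟨h1, hk1, hlt1, hle1⟩ := (memB s).mp hsB
    obtain ⟨t1, tk, tM2, tL⟩ := (memA t).mp htA
    have hcomp : (s ≤ t ∨ t ≤ s) → s ∉ (M \ W) ∪ (W \ M) := by
      intro hc
      rcases le_or_gt s.2 (lam s.1) with hL | hL
      · -- s.2 ≤ lam s.1, hence s.2 ≤ mu s.1, hence s ∈ M and s ∈ W
        have hM2 : s.2 ≤ mu s.1 := by
          by_contra h
          exact hsA ((memA s).mpr ⟨h1, hk1, lt_of_not_ge h, hL⟩)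
        have hsM : s ∈ M := (memM s).mpr
          ⟨h1, hk1, lt_of_le_of_lt (min_le_right _ _) hlt1, le_min hL hle1⟩
        have hts : ¬ t ≤ s := by
          intro h
          have h11 : t.1 ≤ s.1 := h.1
          have h22 : t.2 ≤ s.2 := h.2
          have : mu s.1 ≤ mu t.1 := hmu t1 h11 hk1
          exact absurd (lt_of_lt_of_le tM2 (le_trans h22 (le_trans hM2 this))) (lt_irrefl _)
        have hst : s ≤ t := hc.resolve_right hts
        have hslt : s < t := lt_of_le_of_ne hst (by rintro rfl; exact hsA htA)
        have hsW : s ∈ W := (memW s).mpr (Or.inl ⟨hsB, hsA, t, htA, hslt⟩)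
        rintro (⟨_, h⟩ | ⟨_, h⟩)
        · exact h hsW
        · exact h hsM
      · -- lam s.1 < s.2 : s ∉ M and s ∉ W
        have hsM : s ∉ M := by
          intro h
          obtain ⟨_, _, _, hle⟩ := (memM s).mp h
          exact absurd (lt_of_lt_of_le hL (le_trans hle (min_le_left _ _))) (lt_irrefl _)
        have hsW : s ∉ W := by
          intro h
          rcases (memW s).mp h with ⟨_, hlt⟩ | ⟨h', _⟩
          · obtain ⟨_, u, huA, hsu⟩ := hlt
            obtain ⟨u1, uk, uM2, uL⟩ := (memA u).mp huA
            have h11 : s.1 ≤ u.1 := (le_of_lt hsu).1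
            have h22 : s.2 ≤ u.2 := (le_of_lt hsu).2
            have : lam u.1 ≤ lam s.1 := hlam h1 h11 uk
            exact absurd (lt_of_le_of_lt (le_trans uL this) (lt_of_lt_of_le hL h22))
              (lt_irrefl _)
          · exact hsA h'
        rintro (⟨h, _⟩ | ⟨h, _⟩)
        · exact hsM h
        · exact hsW h
    exact ⟨fun h => hcomp (Or.inl h) hsV, fun h => hcomp (Or.inr h) hsV⟩
  -- assemble
  have hsub : ∀ s : ℕ × ℕ, s ∈ (M \ W) ∪ (W \ M) → s ∈ A ∨ s ∈ B := by
    intro s hs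
    by_contra h
    push_neg at h
    obtain ⟨hM', hW'⟩ := hneither s h.1 h.2
    rcases hs with ⟨h', _⟩ | ⟨h', _⟩
    · exact hM' h'
    · exact hW' h'
  refine ⟨fun s hs => hsub s hs, ?_, ?_, ?_⟩
  · intro s hs
    rcases hsub s hs with hA | hB
    · refine Or.inl ⟨hA, fun hB => ?_⟩
      obtain ⟨hM', hW'⟩ := hboth s hA hB
      rcases hs with ⟨_, h'⟩ | ⟨_, h'⟩
      · exact h' hW'
      · exact h' hM'
    · refine Or.inr ⟨hB, fun hA => ?_⟩
      obtain ⟨hM', hW'⟩ := hboth s hA hB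
      rcases hs with ⟨_, h'⟩ | ⟨_, h'⟩
      · exact h' hW'
      · exact h' hM'
  · intro s hs hsA t htB
    have hsB : s ∉ B := by
      intro hsB
      obtain ⟨hM', hW'⟩ := hboth s hsA hsB
      rcases hs with ⟨_, h'⟩ | ⟨_, h'⟩
      · exact h' hW'
      · exact h' hM'
    exact keyA s hs hsA hsB t htB
  · intro s hs hsB t htA
    have hsA : s ∉ A := by
      intro hsA
      obtain ⟨hM', hW'⟩ := hboth s hsA hsB
      rcases hs with ⟨_, h'⟩ | ⟨_, h'⟩
      · exact h' hW'
      · exact h' hM'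
    exact keyB s hs hsB hsA t htA
end
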